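/- arXiv:1809.01919 — 9 statements merged into one kernel-verified Lean document; each statement's English description precedes it below -/
import Mathlib

section
/- Let a, b, q be natural numbers with a ≥ b + 2. Then, as integers, the sum over s from 0 to q of (s+1)·C(a+s, b) equals (b+1)·(C(a+q+1, b+2) − C(a, b+2)) + (b−a+1)·(C(a+q+1, b+1) − C(a, b+1)), where C(p, r) denotes the binomial coefficient 'p choose r' and b−a+1 is a (possibly negative) integer. -/
lemma key_step (n b : ℕ) (h : b ≤ n) :
    ((b : ℤ) + 1) * Nat.choose n (b + 1) = ((n : ℤ) - b) * Nat.choose n b := by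
  have := Nat.choose_succ_right_eq n b
  have h2 : ((Nat.choose n (b+1) * (b+1) : ℕ) : ℤ) = ((Nat.choose n b * (n - b) : ℕ) : ℤ) := by
    exact_mod_cast congrArg (Nat.cast : ℕ → ℤ) this
  rw [Nat.cast_mul, Nat.cast_mul, Nat.cast_sub h] at h2
  push_cast at h2
  linarith [h2]

/-- Lemma 2.3 (fifth identity): for natural numbers `a ≥ b + 2` and `q`, as integers,
`∑_{s=0}^{q} (s+1)·C(a+s, b)
  = (b+1)·(C(a+q+1, b+2) − C(a, b+2)) + (b−a+1)·(C(a+q+1, b+1) − C(a, b+1))`. -/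
theorem sum_succ_mul_choose_int (a b q : ℕ) (hab : b + 2 ≤ a) :
    ∑ s ∈ Finset.range (q + 1), ((s : ℤ) + 1) * Nat.choose (a + s) b =
      ((b : ℤ) + 1) * ((Nat.choose (a + q + 1) (b + 2) : ℤ) - (Nat.choose a (b + 2) : ℤ)) +
        ((b : ℤ) - (a : ℤ) + 1) *
          ((Nat.choose (a + q + 1) (b + 1) : ℤ) - (Nat.choose a (b + 1) : ℤ)) := by
  induction q with
  | zero =>
      rw [Finset.sum_range_one]
      simp only [Nat.add_zero]
      have h1 : a + 0 + 1 = a + 1 := by ring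
      rw [h1]
      have e2 : (Nat.choose (a+1) (b+2) : ℤ) = Nat.choose a (b+1) + Nat.choose a (b+2) := by
        rw [Nat.choose_succ_succ a (b+1)]; push_cast; ring
      have e1 : (Nat.choose (a+1) (b+1) : ℤ) = Nat.choose a b + Nat.choose a (b+1) := by
        rw [Nat.choose_succ_succ a b]; push_cast; ring
      rw [e1, e2]
      have hk : ((b : ℤ) + 1) * Nat.choose a (b + 1) = ((a : ℤ) - b) * Nat.choose a b :=
        key_step a b (by omega)
      push_cast
      linarith [hk]
  | succ n ih =>
      rw [Finset.sum_range_succ, ih]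
      have hs1 : a + (n + 1) + 1 = (a + n + 1) + 1 := by ring
      have hs2 : a + (n + 1) = a + n + 1 := by ring
      rw [hs1, hs2]
      set m := a + n + 1 with hm
      have e2 : (Nat.choose (m+1) (b+2) : ℤ) = Nat.choose m (b+1) + Nat.choose m (b+2) := by
        rw [Nat.choose_succ_succ m (b+1)]; push_cast; ring
      have e1 : (Nat.choose (m+1) (b+1) : ℤ) = Nat.choose m b + Nat.choose m (b+1) := by
        rw [Nat.choose_succ_succ m b]; push_cast; ring
      rw [e1, e2]
      have hk : ((b : ℤ) + 1) * Nat.choose m (b + 1) = ((m : ℤ) - b) * Nat.choose m b :=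
        key_step m b (by omega)
      have hmz : (m : ℤ) = a + n + 1 := by push_cast [hm]; ring
      push_cast
      rw [hmz] at hk
      linarith [hk]
end

section
/- Let T be a type and G : T × T × T → ℂ any family of complex numbers. Then the following are equivalent: (i) there exists a family Y : T × T × T → ℂ which is symmetric in its first two arguments (Y(k,j,j') = Y(j,k,j') for all k, j, j') and satisfies Y(k,j,j') − Y(k,j',j) = G(j,k,j') − G(j',k,j) for all j, j', k ∈ T; (ii) for all j, j', k ∈ T one has (G(j,k,j') − G(j,j',k)) + (G(j',j,k) − G(j',k,j)) + (G(k,j',j) − G(k,j,j')) = 0. -/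
/-- The linear-algebraic content of the torsion computation of Section 2: for a family
`G : T × T × T → ℂ`, there exists a family `Y` symmetric in its first two arguments with
`Y(k,j,j') − Y(k,j',j) = G(j,k,j') − G(j',k,j)` if and only if the compatibility condition
(W12) holds. -/
theorem torsion_solvability_iff {T : Type*} (G : T × T × T → ℂ) :
    (∃ Y : T × T × T → ℂ,
        (∀ k j j', Y (k, j, j') = Y (j, k, j')) ∧
        (∀ j j' k, Y (k, j, j') - Y (k, j', j) = G (j, k, j') - G (j', k, j))) ↔
    (∀ j j' k,
        (G (j, k, j') - G (j, j', k)) + (G (j', j, k) - G (j', k, j)) +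
          (G (k, j', j) - G (k, j, j')) = 0) := by
  constructor
  · rintro ⟨Y, hs, hd⟩ j j' k
    have h1 := hd j j' k
    have h2 := hd j' k j
    have h3 := hd k j j'
    have s1 := hs k j j'
    have s2 := hs k j' j
    have s3 := hs j j' k
    linear_combination -h1 - h2 - h3 + s1 - s2 + s3
  · intro h
    refine ⟨fun p => (G (p.2.1, p.1, p.2.2) + G (p.1, p.2.1, p.2.2)
        - G (p.2.2, p.2.1, p.1) - G (p.2.2, p.1, p.2.1)) / 3, fun k j j' => by ring, ?_⟩
    intro j j' k
    have h1 := h j j' k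
    have h2 := h k j j'
    simp only []
    linear_combination -h2/3
end

section
/- Let ι be a finite type and let g : ι⁴ → ℂ be alternating in its first three arguments (i.e., g(i,θ,k,l) changes sign under any transposition of i, θ, k). Then the following are equivalent: (i) there exists P : ι⁴ → ℂ symmetric in its last two arguments (P(a,j,b,c) = P(a,j,c,b)) such that for all i, θ, k, l ∈ ι: P(k,i,θ,l) − P(k,θ,i,l) + P(i,θ,k,l) − P(i,k,θ,l) + P(θ,k,i,l) − P(θ,i,k,l) = g(i,θ,k,l); (ii) for all i, θ, k, l ∈ ι: g(i,θ,k,l) − g(l,θ,k,i) + g(l,i,k,θ) − g(l,i,θ,k) = 0. -/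
/-- Solvability of the second line of the torsion system (W8b) of the 1-Cauchy-Fueter
equations: for `g : ι⁴ → ℂ` alternating in its first three arguments, there exists
`P : ι⁴ → ℂ` symmetric in its last two arguments solving the system if and only if the
compatibility condition (W11) holds. -/
theorem torsion_second_line_solvable_iff {ι : Type*} [Fintype ι]
    (g : ι × ι × ι × ι → ℂ)
    (halt₁ : ∀ i θ k l, g (θ, i, k, l) = -g (i, θ, k, l))
    (halt₂ : ∀ i θ k l, g (i, k, θ, l) = -g (i, θ, k, l))
    (halt₃ : ∀ i θ k l, g (k, θ, i, l) = -g (i, θ, k, l)) :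
    (∃ P : ι × ι × ι × ι → ℂ,
        (∀ a j b c, P (a, j, b, c) = P (a, j, c, b)) ∧
        (∀ i θ k l,
          P (k, i, θ, l) - P (k, θ, i, l) + P (i, θ, k, l) - P (i, k, θ, l) +
            P (θ, k, i, l) - P (θ, i, k, l) = g (i, θ, k, l))) ↔
    (∀ i θ k l,
        g (i, θ, k, l) - g (l, θ, k, i) + g (l, i, k, θ) - g (l, i, θ, k) = 0) := by
  constructor
  · rintro ⟨P, hsym, heq⟩ i θ k l
    linear_combination
      hsym i θ k l - heq i θ k l + halt₂ i θ l k + heq i θ l k - hsym i k θ l -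
        halt₂ i k l θ - heq i k l θ - halt₁ i l θ k + hsym i l θ k + halt₁ i l k θ -
        hsym θ i k l + hsym θ k i l + halt₂ θ k l i + heq θ k l i - hsym θ l i k -
        halt₁ θ l k i + hsym k i θ l - hsym k θ i l + hsym k l i θ - hsym l i θ k +
        hsym l θ i k - hsym l k i θ
  · intro h
    refine ⟨fun x => (g x + g (x.1, x.2.1, x.2.2.2, x.2.2.1)) / 8, fun a j b c => by ring,
      fun i θ k l => ?_⟩
    dsimp only
    linear_combination
      (-1/4 : ℂ) * halt₁ i θ k l + (-1/2 : ℂ) * halt₂ i θ k l + (-1/8 : ℂ) * halt₃ i θ k l +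
        (1/8 : ℂ) * h i θ l k + (1/4 : ℂ) * halt₁ i k θ l + (1/8 : ℂ) * halt₃ i k θ l +
        (-1/8 : ℂ) * h i k l θ
end

section
/- Let ι be a finite type and let g : ι⁴ → ℂ be alternating in its first three arguments (i.e., g(i,θ,k,l) changes sign under any transposition of i, θ, k). Then the following are equivalent: (i) there exists Q : ι⁴ → ℂ symmetric in its second and third arguments (Q(a,i,l,θ) = Q(a,l,i,θ)) such that for all i, θ, k, l ∈ ι: Q(k,i,l,θ) − Q(k,θ,l,i) + Q(i,θ,l,k) − Q(i,k,l,θ) + Q(θ,k,l,i) − Q(θ,i,l,k) = g(i,θ,k,l); (ii) for all i, θ, k, l ∈ ι: g(i,θ,k,l) − g(l,θ,k,i) + g(l,i,k,θ) − g(l,i,θ,k) = 0. -/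
/-- Solvability of the third line of the torsion system (W8b) of the 1-Cauchy-Fueter
equations: for `g : ι⁴ → ℂ` alternating in its first three arguments, there exists
`Q : ι⁴ → ℂ` symmetric in its second and third arguments solving the system if and only if
the compatibility condition (W12b) holds. -/
theorem torsion_third_line_solvable_iff {ι : Type*} [Fintype ι]
    (g : ι × ι × ι × ι → ℂ)
    (halt₁ : ∀ i θ k l, g (θ, i, k, l) = -g (i, θ, k, l))
    (halt₂ : ∀ i θ k l, g (i, k, θ, l) = -g (i, θ, k, l))
    (halt₃ : ∀ i θ k l, g (k, θ, i, l) = -g (i, θ, k, l)) :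
    (∃ Q : ι × ι × ι × ι → ℂ,
        (∀ a i l θ, Q (a, i, l, θ) = Q (a, l, i, θ)) ∧
        (∀ i θ k l,
          Q (k, i, l, θ) - Q (k, θ, l, i) + Q (i, θ, l, k) - Q (i, k, l, θ) +
            Q (θ, k, l, i) - Q (θ, i, l, k) = g (i, θ, k, l))) ↔
    (∀ i θ k l,
        g (i, θ, k, l) - g (l, θ, k, i) + g (l, i, k, θ) - g (l, i, θ, k) = 0) := by
  constructor
  · rintro ⟨Q, hsym, hQ⟩ i θ k l
    linear_combination -(hQ i θ k l) + (hQ l θ k i) - (hQ l i k θ) + (hQ l i θ k)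
      + hsym k i l θ + hsym θ k l i + hsym k l θ i + hsym l i θ k + hsym i k θ l
      + hsym θ i k l - hsym i k l θ - hsym θ i l k - hsym k i θ l - hsym l k θ i
      - hsym i l θ k - hsym l i k θ
  · intro hcompat
    refine ⟨fun p => (g (p.1, p.2.1, p.2.2.2, p.2.2.1) + g (p.1, p.2.2.1, p.2.2.2, p.2.1)) / 8,
      fun a i l θ => by ring, fun i θ k l => ?_⟩
    linear_combination (-(1:ℂ)/4) * hcompat i θ k l
      - (1/8 : ℂ) * halt₁ i θ k l - (3/8 : ℂ) * halt₂ i θ k l - (1/8 : ℂ) * halt₃ i θ k l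
      + (1/8 : ℂ) * halt₁ i k θ l + (1/8 : ℂ) * halt₃ i k θ l
      - (1/4 : ℂ) * halt₁ i l θ k + (1/8 : ℂ) * halt₃ i l θ k
      + (1/4 : ℂ) * halt₁ i l k θ - (1/8 : ℂ) * halt₃ i l k θ
      - (1/4 : ℂ) * halt₁ θ l k i + (1/8 : ℂ) * halt₃ θ l k i
end

section
/- Let ι be a finite type and let Z : ι × ι × ι → Multiset ι → Multiset ι → ℂ be a family which is alternating in its three ι-arguments and which satisfies, for all i, θ, k, l ∈ ι and all finite multisets J, Λ over ι: (a) Z(i,θ,k)(J)(Λ+{l}) − Z(l,θ,k)(J)(Λ+{i}) + Z(l,i,k)(J)(Λ+{θ}) − Z(l,i,θ)(J)(Λ+{k}) = 0, and (b) Z(i,θ,k)(J+{l})(Λ) − Z(l,θ,k)(J+{i})(Λ) + Z(l,i,k)(J+{θ})(Λ) − Z(l,i,θ)(J+{k})(Λ) = 0, where M+{x} denotes the multiset M with one copy of x added. Then there exists a family Y : ι → Multiset ι → Multiset ι → ℂ such that for all i, θ, k ∈ ι and all finite multisets J, Λ over ι: (Y(k)(J+{i})(Λ+{θ}) − Y(i)(J+{k})(Λ+{θ}))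 − (Y(k)(J+{θ})(Λ+{i}) − Y(θ)(J+{k})(Λ+{i})) + (Y(i)(J+{θ})(Λ+{k}) − Y(θ)(J+{i})(Λ+{k})) = Z(i,θ,k)(J)(Λ). -/
set_option linter.unusedVariables false

namespace ProlongTorsion

set_option linter.unusedSectionVars false
variable {ι : Type*} [DecidableEq ι]

lemma msum_congr {α : Type*} {s : Multiset α} {f g : α → ℂ} (h : ∀ a ∈ s, f a = g a) :
    (s.map f).sum = (s.map g).sum := by rw [Multiset.map_congr rfl h]

lemma msum_neg {α : Type*} {s : Multiset α} {f g : α → ℂ} (h : ∀ a ∈ s, f a = -g a) :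
    (s.map f).sum = -(s.map g).sum := by
  induction s using Multiset.induction with
  | empty => simp
  | cons a s ih =>
      simp only [Multiset.map_cons, Multiset.sum_cons]
      have h1 := h a (Multiset.mem_cons_self a s)
      have h2 := ih fun b hb => h b (Multiset.mem_cons_of_mem hb)
      rw [h1, h2]; ring

lemma msum_comb3' {α : Type*} (s : Multiset α) (f g h e : α → ℂ)
    (hpt : ∀ a ∈ s, f a - g a + h a = e a) :
    (s.map f).sum - (s.map g).sum + (s.map h).sum = (s.map e).sum := by
  induction s using Multiset.induction with
  | empty => simp
  | cons a s ih =>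
      simp only [Multiset.map_cons, Multiset.sum_cons]
      have h1 := hpt a (Multiset.mem_cons_self a s)
      have h2 := ih fun b hb => hpt b (Multiset.mem_cons_of_mem hb)
      linear_combination h1 + h2

lemma msum_comb3 {α : Type*} (s : Multiset α) (f g h : α → ℂ) (w : ℂ)
    (hpt : ∀ a ∈ s, f a - g a + h a = w) :
    (s.map f).sum - (s.map g).sum + (s.map h).sum = (s.card : ℂ) * w := by
  induction s using Multiset.induction with
  | empty => simp
  | cons a s ih =>
      simp only [Multiset.map_cons, Multiset.sum_cons, Multiset.card_cons]
      have h1 := hpt a (Multiset.mem_cons_self a s)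
      have h2 := ih fun b hb => hpt b (Multiset.mem_cons_of_mem hb)
      push_cast
      linear_combination h1 + h2

lemma msum_comb4 {α : Type*} (s : Multiset α) (f g h e : α → ℂ) (w : ℂ)
    (hpt : ∀ a ∈ s, f a - g a + h a - e a = w) :
    (s.map f).sum - (s.map g).sum + (s.map h).sum - (s.map e).sum = (s.card : ℂ) * w := by
  induction s using Multiset.induction with
  | empty => simp
  | cons a s ih =>
      simp only [Multiset.map_cons, Multiset.sum_cons, Multiset.card_cons]
      have h1 := hpt a (Multiset.mem_cons_self a s)
      have h2 := ih fun b hb => hpt b (Multiset.mem_cons_of_mem hb)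
      push_cast
      linear_combination h1 + h2

lemma msum_comb2 {α : Type*} (s : Multiset α) (f g : α → ℂ) (w : ℂ)
    (hpt : ∀ a ∈ s, f a - g a = w) :
    (s.map f).sum - (s.map g).sum = (s.card : ℂ) * w := by
  induction s using Multiset.induction with
  | empty => simp
  | cons a s ih =>
      simp only [Multiset.map_cons, Multiset.sum_cons, Multiset.card_cons]
      have h1 := hpt a (Multiset.mem_cons_self a s)
      have h2 := ih fun b hb => hpt b (Multiset.mem_cons_of_mem hb)
      push_cast
      linear_combination h1 + h2

lemma sum_cons_erase (f : ι → Multiset ι → ℂ) (i : ι) (s : Multiset ι) :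
    ((i ::ₘ s).map fun a => f a ((i ::ₘ s).erase a)).sum
      = f i s + (s.map fun a => f a (i ::ₘ s.erase a)).sum := by
  rw [Multiset.map_cons, Multiset.sum_cons, Multiset.erase_cons_head]
  congr 1
  exact msum_congr fun a ha => by rw [Multiset.erase_cons_tail_of_mem ha]

/-! ### Good families -/

structure Good (Z : ι → ι → ι → Multiset ι → Multiset ι → ℂ) : Prop where
  alt1 : ∀ i θ k J Λ, Z θ i k J Λ = -Z i θ k J Λ
  alt2 : ∀ i θ k J Λ, Z i k θ J Λ = -Z i θ k J Λ
  ha : ∀ i θ k l J Λ, Z i θ k J (l ::ₘ Λ) - Z l θ k J (i ::ₘ Λ)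
        + Z l i k J (θ ::ₘ Λ) - Z l i θ J (k ::ₘ Λ) = 0
  hb : ∀ i θ k l J Λ, Z i θ k (l ::ₘ J) Λ - Z l θ k (i ::ₘ J) Λ
        + Z l i k (θ ::ₘ J) Λ - Z l i θ (k ::ₘ J) Λ = 0

namespace Good

variable {Z : ι → ι → ι → Multiset ι → Multiset ι → ℂ}

lemma cyc1 (good : Good Z) (i θ k : ι) (J Λ : Multiset ι) : Z k i θ J Λ = Z i θ k J Λ := by
  linear_combination good.alt1 i k θ J Λ - good.alt2 i θ k J Λ

lemma cyc2 (good : Good Z) (i θ k : ι) (J Λ : Multiset ι) : Z θ k i J Λ = Z i θ k J Λ := by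
  linear_combination good.alt2 θ i k J Λ - good.alt1 i θ k J Λ

lemma alt3 (good : Good Z) (i θ k : ι) (J Λ : Multiset ι) : Z k θ i J Λ = -Z i θ k J Λ := by
  linear_combination good.alt1 θ k i J Λ - cyc2 good i θ k J Λ

end Good

/-! ### The operators -/

noncomputable def Emap (Z : ι → ι → ι → Multiset ι → Multiset ι → ℂ) :
    ι → ι → ι → Multiset ι → Multiset ι → ℂ :=
  fun m θ k J Λ => ((Λ.card : ℂ) + 2)⁻¹ *
    (Λ.map fun b => Z m θ k (b ::ₘ J) (Λ.erase b)).sum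

noncomputable def Hy (Z : ι → ι → ι → Multiset ι → Multiset ι → ℂ) :
    ι → ι → Multiset ι → Multiset ι → ℂ :=
  fun θ k J Λ => ((Λ.card : ℂ) + 2)⁻¹ *
    (Λ.map fun b => Z b θ k J (Λ.erase b)).sum

variable {Z : ι → ι → ι → Multiset ι → Multiset ι → ℂ}

lemma good_Emap (good : Good Z) : Good (Emap Z) := by
  constructor
  · intro i θ k J Λ
    unfold Emap
    rw [msum_neg fun b _ => good.alt1 i θ k (b ::ₘ J) (Λ.erase b)]; ring
  · intro i θ k J Λ
    unfold Emap
    rw [msum_neg fun b _ => good.alt2 i θ k (b ::ₘ J) (Λ.erase b)]; ring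
  · intro i θ k l J Λ
    unfold Emap
    simp only [Multiset.card_cons]
    rw [sum_cons_erase (fun b M => Z i θ k (b ::ₘ J) M) l Λ,
        sum_cons_erase (fun b M => Z l θ k (b ::ₘ J) M) i Λ,
        sum_cons_erase (fun b M => Z l i k (b ::ₘ J) M) θ Λ,
        sum_cons_erase (fun b M => Z l i θ (b ::ₘ J) M) k Λ]
    have hS := msum_comb4 Λ
      (fun b => Z i θ k (b ::ₘ J) (l ::ₘ Λ.erase b))
      (fun b => Z l θ k (b ::ₘ J) (i ::ₘ Λ.erase b))
      (fun b => Z l i k (b ::ₘ J) (θ ::ₘ Λ.erase b))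
      (fun b => Z l i θ (b ::ₘ J) (k ::ₘ Λ.erase b)) 0
      (fun b _ => good.ha i θ k l (b ::ₘ J) (Λ.erase b))
    have hh := good.hb i θ k l J Λ
    push_cast
    linear_combination (((Λ.card : ℂ) + 1 + 2)⁻¹) * hS + (((Λ.card : ℂ) + 1 + 2)⁻¹) * hh
  · intro i θ k l J Λ
    unfold Emap
    rw [← mul_sub, ← mul_add, ← mul_sub]
    have hS := msum_comb4 Λ
      (fun b => Z i θ k (b ::ₘ l ::ₘ J) (Λ.erase b))
      (fun b => Z l θ k (b ::ₘ i ::ₘ J) (Λ.erase b))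
      (fun b => Z l i k (b ::ₘ θ ::ₘ J) (Λ.erase b))
      (fun b => Z l i θ (b ::ₘ k ::ₘ J) (Λ.erase b)) 0
      (fun b _ => by
        have h := good.hb i θ k l (b ::ₘ J) (Λ.erase b)
        rw [Multiset.cons_swap l b J, Multiset.cons_swap i b J, Multiset.cons_swap θ b J,
            Multiset.cons_swap k b J] at h
        exact h)
    rw [hS]; ring

lemma dy_Hy (good : Good Z) (i θ k : ι) (J Λ : Multiset ι) :
    Hy Z θ k J (i ::ₘ Λ) - Hy Z i k J (θ ::ₘ Λ) + Hy Z i θ J (k ::ₘ Λ) = Z i θ k J Λ := by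
  unfold Hy
  simp only [Multiset.card_cons]
  rw [sum_cons_erase (fun b M => Z b θ k J M) i Λ,
      sum_cons_erase (fun b M => Z b i k J M) θ Λ,
      sum_cons_erase (fun b M => Z b i θ J M) k Λ]
  have hS := msum_comb3 Λ
    (fun b => Z b θ k J (i ::ₘ Λ.erase b))
    (fun b => Z b i k J (θ ::ₘ Λ.erase b))
    (fun b => Z b i θ J (k ::ₘ Λ.erase b))
    (Z i θ k J Λ)
    (fun b hb => by
      have h := good.ha i θ k b J (Λ.erase b)
      rw [Multiset.cons_erase hb] at h
      linear_combination -h)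
  have h1 : Z θ i k J Λ = -Z i θ k J Λ := good.alt1 i θ k J Λ
  have h2 : Z k i θ J Λ = Z i θ k J Λ := good.cyc1 i θ k J Λ
  have hne : ((Λ.card : ℂ) + 1 + 2) ≠ 0 := by
    have : ((Λ.card : ℂ) + 1 + 2) = ((Λ.card + 3 : ℕ) : ℂ) := by push_cast; ring
    rw [this]
    exact Nat.cast_ne_zero.mpr (by omega)
  have hinv : ((Λ.card : ℂ) + 1 + 2) * ((Λ.card : ℂ) + 1 + 2)⁻¹ = 1 := mul_inv_cancel₀ hne
  push_cast
  linear_combination (((Λ.card : ℂ) + 1 + 2)⁻¹) * hS - (((Λ.card : ℂ) + 1 + 2)⁻¹) * h1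
    + (((Λ.card : ℂ) + 1 + 2)⁻¹) * h2 + (Z i θ k J Λ) * hinv

lemma dx_Hy (good : Good Z) (i θ k : ι) (J Λ : Multiset ι) :
    Hy Z θ k (i ::ₘ J) Λ - Hy Z i k (θ ::ₘ J) Λ + Hy Z i θ (k ::ₘ J) Λ
      = Emap Z i θ k J Λ := by
  unfold Hy Emap
  rw [← mul_sub, ← mul_add]
  congr 1
  exact msum_comb3' Λ _ _ _ _ (fun b _ => by linear_combination -good.hb i θ k b J (Λ.erase b))

/-! ### The recursive solution X -/

noncomputable def Xrec : ℕ → (ι → ι → ι → Multiset ι → Multiset ι → ℂ) →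
    ι → ι → Multiset ι → Multiset ι → ℂ
  | 0 => fun Z θ k J Λ => Hy Z θ k J Λ
  | n+1 => fun Z θ k J Λ => Hy Z θ k J Λ + ((J.card : ℂ) + 1)⁻¹ *
      (J.map fun a => Xrec n (Emap Z) a k (J.erase a) (θ ::ₘ Λ)
                    - Xrec n (Emap Z) a θ (J.erase a) (k ::ₘ Λ)).sum

lemma Xrec_stab : ∀ (n : ℕ) (Z : ι → ι → ι → Multiset ι → Multiset ι → ℂ)
    (θ k : ι) (J Λ : Multiset ι), J.card ≤ n →
    Xrec (n+1) Z θ k J Λ = Xrec n Z θ k J Λ := by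
  intro n
  induction n with
  | zero =>
      intro Z θ k J Λ h
      have hJ : J = 0 := Multiset.card_eq_zero.mp (Nat.le_zero.mp h)
      subst hJ
      simp [Xrec]
  | succ n ih =>
      intro Z θ k J Λ h
      show Hy Z θ k J Λ + _ = Hy Z θ k J Λ + _
      congr 2
      refine msum_congr fun a ha => ?_
      have hc : (J.erase a).card ≤ n := by
        rw [Multiset.card_erase_of_mem ha]
        exact Nat.pred_le_pred h
      rw [ih (Emap Z) a k (J.erase a) (θ ::ₘ Λ) hc, ih (Emap Z) a θ (J.erase a) (k ::ₘ Λ) hc]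

noncomputable def Xm (Z : ι → ι → ι → Multiset ι → Multiset ι → ℂ)
    (θ k : ι) (J Λ : Multiset ι) : ℂ := Xrec J.card Z θ k J Λ

lemma Xrec_eq_Xm (n : ℕ) (Z : ι → ι → ι → Multiset ι → Multiset ι → ℂ)
    (θ k : ι) (J Λ : Multiset ι) (h : J.card ≤ n) :
    Xrec n Z θ k J Λ = Xm Z θ k J Λ := by
  induction n with
  | zero => unfold Xm; rw [Nat.le_zero.mp h]
  | succ n ih =>
      rcases Nat.lt_or_ge J.card (n+1) with hlt | hge
      · rw [Xrec_stab n Z θ k J Λ (by omega)]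
        exact ih (by omega)
      · unfold Xm
        rw [Nat.le_antisymm h hge]

lemma X_unfold (Z : ι → ι → ι → Multiset ι → Multiset ι → ℂ)
    (θ k : ι) (J Λ : Multiset ι) :
    Xm Z θ k J Λ = Hy Z θ k J Λ + ((J.card : ℂ) + 1)⁻¹ *
      (J.map fun a => Xm (Emap Z) a k (J.erase a) (θ ::ₘ Λ)
                    - Xm (Emap Z) a θ (J.erase a) (k ::ₘ Λ)).sum := by
  rcases hJ : J.card with _ | n
  · have hJ0 : J = 0 := Multiset.card_eq_zero.mp hJ
    subst hJ0
    simp [Xm, Xrec]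
  · have h1 : Xm Z θ k J Λ = Xrec (n+1) Z θ k J Λ := by unfold Xm; rw [hJ]
    rw [h1]
    show Hy Z θ k J Λ + _ = Hy Z θ k J Λ + _
    congr 2
    · rw [hJ]
    · refine msum_congr fun a ha => ?_
      have hc : (J.erase a).card ≤ n := by rw [Multiset.card_erase_of_mem ha, hJ]; exact Nat.le_refl n
      rw [Xrec_eq_Xm n (Emap Z) a k (J.erase a) (θ ::ₘ Λ) hc,
          Xrec_eq_Xm n (Emap Z) a θ (J.erase a) (k ::ₘ Λ) hc]

lemma Xm_alt {Z : ι → ι → ι → Multiset ι → Multiset ι → ℂ}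
    (h2 : ∀ i θ k J Λ, Z i k θ J Λ = -Z i θ k J Λ) (θ k : ι) (J Λ : Multiset ι) :
    Xm Z θ k J Λ = -Xm Z k θ J Λ := by
  suffices H : ∀ (n : ℕ) (Z : ι → ι → ι → Multiset ι → Multiset ι → ℂ),
      (∀ i θ k J Λ, Z i k θ J Λ = -Z i θ k J Λ) →
      ∀ (θ k : ι) (J Λ : Multiset ι), Xrec n Z θ k J Λ = -Xrec n Z k θ J Λ by
    exact H J.card Z h2 θ k J Λ
  intro n
  induction n with
  | zero =>
      intro Z h2 θ k J Λ
      show Hy Z θ k J Λ = -Hy Z k θ J Λ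
      unfold Hy
      rw [msum_neg fun b _ => h2 b θ k J (Λ.erase b)]; ring
  | succ n ih =>
      intro Z h2 θ k J Λ
      show Hy Z θ k J Λ + _ = -(Hy Z k θ J Λ + _)
      have hE2 : ∀ i θ' k' J' Λ', Emap Z i k' θ' J' Λ' = -Emap Z i θ' k' J' Λ' := by
        intro i θ' k' J' Λ'
        unfold Emap
        rw [msum_neg fun b _ => h2 i θ' k' (b ::ₘ J') (Λ'.erase b)]; ring
      have hHy : Hy Z θ k J Λ = -Hy Z k θ J Λ := by
        unfold Hy
        rw [msum_neg fun b _ => h2 b θ k J (Λ.erase b)]; ring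
      have hsum : (J.map fun a => Xrec n (Emap Z) a k (J.erase a) (θ ::ₘ Λ)
                    - Xrec n (Emap Z) a θ (J.erase a) (k ::ₘ Λ)).sum
          = -(J.map fun a => Xrec n (Emap Z) a θ (J.erase a) (k ::ₘ Λ)
                    - Xrec n (Emap Z) a k (J.erase a) (θ ::ₘ Λ)).sum := by
        refine msum_neg fun a _ => by ring
      rw [hHy, hsum]; ring

lemma dy_X {Z : ι → ι → ι → Multiset ι → Multiset ι → ℂ} (good : Good Z)
    (i θ k : ι) (J Λ : Multiset ι) :
    Xm Z θ k J (i ::ₘ Λ) - Xm Z i k J (θ ::ₘ Λ) + Xm Z i θ J (k ::ₘ Λ) = Z i θ k J Λ := by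
  rw [X_unfold Z θ k J (i ::ₘ Λ), X_unfold Z i k J (θ ::ₘ Λ), X_unfold Z i θ J (k ::ₘ Λ)]
  have hdy := dy_Hy good i θ k J Λ
  have hS := msum_comb3 J
    (fun a => Xm (Emap Z) a k (J.erase a) (θ ::ₘ i ::ₘ Λ)
            - Xm (Emap Z) a θ (J.erase a) (k ::ₘ i ::ₘ Λ))
    (fun a => Xm (Emap Z) a k (J.erase a) (i ::ₘ θ ::ₘ Λ)
            - Xm (Emap Z) a i (J.erase a) (k ::ₘ θ ::ₘ Λ))
    (fun a => Xm (Emap Z) a θ (J.erase a) (i ::ₘ k ::ₘ Λ)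
            - Xm (Emap Z) a i (J.erase a) (θ ::ₘ k ::ₘ Λ))
    0
    (fun a _ => by
      rw [Multiset.cons_swap i θ Λ, Multiset.cons_swap i k Λ, Multiset.cons_swap θ k Λ]
      ring)
  linear_combination hdy + (((J.card : ℂ) + 1)⁻¹) * hS

/-! ### d_x X = 0 -/

lemma dx_X : ∀ (n : ℕ) (Z : ι → ι → ι → Multiset ι → Multiset ι → ℂ), Good Z →
    ∀ (i θ k : ι) (J Λ : Multiset ι), J.card < n →
    Xm Z θ k (i ::ₘ J) Λ - Xm Z i k (θ ::ₘ J) Λ + Xm Z i θ (k ::ₘ J) Λ = 0 := by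
  intro n
  induction n with
  | zero => exact fun Z good i θ k J Λ h => absurd h (Nat.not_lt_zero _)
  | succ n ih =>
      intro Z good i θ k J Λ h
      have goodE := good_Emap good
      rw [X_unfold Z θ k (i ::ₘ J) Λ, X_unfold Z i k (θ ::ₘ J) Λ, X_unfold Z i θ (k ::ₘ J) Λ]
      simp only [Multiset.card_cons]
      rw [sum_cons_erase
            (fun a M => Xm (Emap Z) a k M (θ ::ₘ Λ) - Xm (Emap Z) a θ M (k ::ₘ Λ)) i J,
          sum_cons_erase
            (fun a M => Xm (Emap Z) a k M (i ::ₘ Λ) - Xm (Emap Z) a i M (k ::ₘ Λ)) θ J,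
          sum_cons_erase
            (fun a M => Xm (Emap Z) a θ M (i ::ₘ Λ) - Xm (Emap Z) a i M (θ ::ₘ Λ)) k J]
      have hHy := dx_Hy good i θ k J Λ
      have d1 := dy_X goodE i θ k J Λ
      have B1 := Xm_alt goodE.alt2 θ i J (k ::ₘ Λ)
      have B2 := Xm_alt goodE.alt2 k θ J (i ::ₘ Λ)
      have B3 := Xm_alt goodE.alt2 k i J (θ ::ₘ Λ)
      have hS := msum_comb3 J
        (fun a => Xm (Emap Z) a k (i ::ₘ J.erase a) (θ ::ₘ Λ)
                - Xm (Emap Z) a θ (i ::ₘ J.erase a) (k ::ₘ Λ))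
        (fun a => Xm (Emap Z) a k (θ ::ₘ J.erase a) (i ::ₘ Λ)
                - Xm (Emap Z) a i (θ ::ₘ J.erase a) (k ::ₘ Λ))
        (fun a => Xm (Emap Z) a θ (k ::ₘ J.erase a) (i ::ₘ Λ)
                - Xm (Emap Z) a i (k ::ₘ J.erase a) (θ ::ₘ Λ))
        (-(Emap Z i θ k J Λ))
        (fun a ha => by
          have hM : a ::ₘ J.erase a = J := Multiset.cons_erase ha
          have hlt : (J.erase a).card < n := by
            have h1 := Multiset.card_erase_lt_of_mem ha
            omega
          have e1 := ih (Emap Z) goodE i a k (J.erase a) (θ ::ₘ Λ) hlt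
          have e2 := ih (Emap Z) goodE i a θ (J.erase a) (k ::ₘ Λ) hlt
          have e3 := ih (Emap Z) goodE θ a k (J.erase a) (i ::ₘ Λ) hlt
          rw [hM] at e1 e2 e3
          have A1 := Xm_alt goodE.alt2 i a (k ::ₘ J.erase a) (θ ::ₘ Λ)
          have A2 := Xm_alt goodE.alt2 i a (θ ::ₘ J.erase a) (k ::ₘ Λ)
          have A3 := Xm_alt goodE.alt2 θ a (k ::ₘ J.erase a) (i ::ₘ Λ)
          linear_combination e1 - e2 - e3 - d1 - A1 + A2 + A3)
      have hne : ((J.card : ℂ) + 1 + 1) ≠ 0 := by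
        have he : ((J.card : ℂ) + 1 + 1) = ((J.card + 2 : ℕ) : ℂ) := by push_cast; ring
        rw [he]
        exact Nat.cast_ne_zero.mpr (by omega)
      have hq : ((J.card : ℂ) + 1 + 1) * ((J.card : ℂ) + 1 + 1)⁻¹ = 1 := mul_inv_cancel₀ hne
      push_cast
      linear_combination hHy + (((J.card : ℂ) + 1 + 1)⁻¹) * B1 + (((J.card : ℂ) + 1 + 1)⁻¹) * B2
        - (((J.card : ℂ) + 1 + 1)⁻¹) * B3 - 2 * (((J.card : ℂ) + 1 + 1)⁻¹) * d1
        + (((J.card : ℂ) + 1 + 1)⁻¹) * hS - (Emap Z i θ k J Λ) * hq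

lemma dx_X' {Z : ι → ι → ι → Multiset ι → Multiset ι → ℂ} (good : Good Z)
    (i θ k : ι) (J Λ : Multiset ι) :
    Xm Z θ k (i ::ₘ J) Λ - Xm Z i k (θ ::ₘ J) Λ + Xm Z i θ (k ::ₘ J) Λ = 0 :=
  dx_X (J.card + 1) Z good i θ k J Λ (Nat.lt_succ_self _)

/-! ### The solution Y -/

noncomputable def Ym (Z : ι → ι → ι → Multiset ι → Multiset ι → ℂ) :
    ι → Multiset ι → Multiset ι → ℂ :=
  fun k J Λ => -(((J.card : ℂ) + 1)⁻¹ * (J.map fun a => Xm Z a k (J.erase a) Λ).sum)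

lemma dx_Y {Z : ι → ι → ι → Multiset ι → Multiset ι → ℂ} (good : Good Z)
    (θ k : ι) (J Λ : Multiset ι) :
    Ym Z k (θ ::ₘ J) Λ - Ym Z θ (k ::ₘ J) Λ = -Xm Z θ k J Λ := by
  unfold Ym
  simp only [Multiset.card_cons]
  rw [sum_cons_erase (fun a M => Xm Z a k M Λ) θ J,
      sum_cons_erase (fun a M => Xm Z a θ M Λ) k J]
  have hx := Xm_alt good.alt2 k θ J Λ
  have hS := msum_comb2 J
    (fun a => Xm Z a k (θ ::ₘ J.erase a) Λ)
    (fun a => Xm Z a θ (k ::ₘ J.erase a) Λ)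
    (Xm Z θ k J Λ)
    (fun a ha => by
      have hM : a ::ₘ J.erase a = J := Multiset.cons_erase ha
      have e := dx_X' good θ a k (J.erase a) Λ
      rw [hM] at e
      have A := Xm_alt good.alt2 θ a (k ::ₘ J.erase a) Λ
      linear_combination e - A)
  have hne : ((J.card : ℂ) + 1 + 1) ≠ 0 := by
    have he : ((J.card : ℂ) + 1 + 1) = ((J.card + 2 : ℕ) : ℂ) := by push_cast; ring
    rw [he]
    exact Nat.cast_ne_zero.mpr (by omega)
  have hq : ((J.card : ℂ) + 1 + 1) * ((J.card : ℂ) + 1 + 1)⁻¹ = 1 := mul_inv_cancel₀ hne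
  push_cast
  linear_combination (((J.card : ℂ) + 1 + 1)⁻¹) * hx - (((J.card : ℂ) + 1 + 1)⁻¹) * hS
    - (Xm Z θ k J Λ) * hq

end ProlongTorsion

/-- The main solvability result of Section 3: the torsion of every prolongation of the
1-Cauchy-Fueter torsion system vanishes. `Z (i,θ,k) J Λ` stands for the iterated derivative
`∂φ_{iθk}/∂z^{J1}∂z^{Λ0}` of an alternating family of analytic functions, hypotheses `ha`
and `hb` are the derivatives of the compatibility conditions (W11) and (W12b), and
`Y k (i ::ₘ J) (θ ::ₘ Λ)` is the jet component `Y^k_{(Ji)(Λθ)}` solving (W10b). -/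
theorem prolongation_torsion_solvable {ι : Type*} [Fintype ι]
    (Z : ι × ι × ι → Multiset ι → Multiset ι → ℂ)
    (halt₁ : ∀ i θ k J Λ, Z (θ, i, k) J Λ = -Z (i, θ, k) J Λ)
    (halt₂ : ∀ i θ k J Λ, Z (i, k, θ) J Λ = -Z (i, θ, k) J Λ)
    (halt₃ : ∀ i θ k J Λ, Z (k, θ, i) J Λ = -Z (i, θ, k) J Λ)
    (ha : ∀ i θ k l J Λ,
      Z (i, θ, k) J (l ::ₘ Λ) - Z (l, θ, k) J (i ::ₘ Λ) +
        Z (l, i, k) J (θ ::ₘ Λ) - Z (l, i, θ) J (k ::ₘ Λ) = 0)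
    (hb : ∀ i θ k l J Λ,
      Z (i, θ, k) (l ::ₘ J) Λ - Z (l, θ, k) (i ::ₘ J) Λ +
        Z (l, i, k) (θ ::ₘ J) Λ - Z (l, i, θ) (k ::ₘ J) Λ = 0) :
    ∃ Y : ι → Multiset ι → Multiset ι → ℂ,
      ∀ i θ k J Λ,
        (Y k (i ::ₘ J) (θ ::ₘ Λ) - Y i (k ::ₘ J) (θ ::ₘ Λ)) -
          (Y k (θ ::ₘ J) (i ::ₘ Λ) - Y θ (k ::ₘ J) (i ::ₘ Λ)) +
          (Y i (θ ::ₘ J) (k ::ₘ Λ) - Y θ (i ::ₘ J) (k ::ₘ Λ)) = Z (i, θ, k) J Λ := by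
  classical
  set Z3 : ι → ι → ι → Multiset ι → Multiset ι → ℂ := fun i θ k J Λ => Z (i, θ, k) J Λ with hZ3
  have good : ProlongTorsion.Good Z3 :=
    ⟨fun i θ k J Λ => halt₁ i θ k J Λ, fun i θ k J Λ => halt₂ i θ k J Λ,
     fun i θ k l J Λ => ha i θ k l J Λ, fun i θ k l J Λ => hb i θ k l J Λ⟩
  refine ⟨ProlongTorsion.Ym Z3, fun i θ k J Λ => ?_⟩
  have p1 := ProlongTorsion.dx_Y good i k J (θ ::ₘ Λ)
  have p2 := ProlongTorsion.dx_Y good θ k J (i ::ₘ Λ)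
  have p3 := ProlongTorsion.dx_Y good θ i J (k ::ₘ Λ)
  have d := ProlongTorsion.dy_X good i θ k J Λ
  have al := ProlongTorsion.Xm_alt good.alt2 i θ J (k ::ₘ Λ)
  linear_combination p1 - p2 + p3 + d - al
end

section
/- Fix positive integers n, α, β and constant coefficients a(m,i,j) ∈ ℂ (m ∈ {1,…,α}, i ∈ {1,…,β}, j ∈ {1,…,n}). Then the system A is in involution (every k-regular sequence with 1 ≤ k ≤ n−1 can be extended to a (k+1)-regular sequence) if and only if dim A¹ = dim A⁰ + Σ_{r=1}^{n−1} dim A⁰_r. -/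
noncomputable section

/-- The linear map induced on 1-jets by a first-order constant-coefficient operator:
`(op1 a P) m = Σ_{i,j} a m i j · P i j`. -/
def op1 (n α β : ℕ) (a : Fin α → Fin β → Fin n → ℂ) :
    (Fin β → Fin n → ℂ) →ₗ[ℂ] (Fin α → ℂ) where
  toFun P := fun m => ∑ i, ∑ j, a m i j * P i j
  map_add' P Q := by
    funext m
    simp only [Pi.add_apply]
    rw [← Finset.sum_add_distrib]
    refine Finset.sum_congr rfl fun i _ => ?_
    rw [← Finset.sum_add_distrib]
    exact Finset.sum_congr rfl fun j _ => by ring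
  map_smul' c P := by
    funext m
    simp only [Pi.smul_apply, smul_eq_mul, RingHom.id_apply]
    rw [Finset.mul_sum]
    refine Finset.sum_congr rfl fun i _ => ?_
    rw [Finset.mul_sum]
    exact Finset.sum_congr rfl fun j _ => by ring

/-- The prolonged linear map on 2-jets: `(op2 a P) m l = Σ_{i,j} a m i j · P i l j`. -/
def op2 (n α β : ℕ) (a : Fin α → Fin β → Fin n → ℂ) :
    (Fin β → Fin n → Fin n → ℂ) →ₗ[ℂ] (Fin α → Fin n → ℂ) where
  toFun P := fun m l => ∑ i, ∑ j, a m i j * P i l j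
  map_add' P Q := by
    funext m l
    simp only [Pi.add_apply]
    rw [← Finset.sum_add_distrib]
    refine Finset.sum_congr rfl fun i _ => ?_
    rw [← Finset.sum_add_distrib]
    exact Finset.sum_congr rfl fun j _ => by ring
  map_smul' c P := by
    funext m l
    simp only [Pi.smul_apply, smul_eq_mul, RingHom.id_apply]
    rw [Finset.mul_sum]
    refine Finset.sum_congr rfl fun i _ => ?_
    rw [Finset.mul_sum]
    exact Finset.sum_congr rfl fun j _ => by ring

/-- The twice-prolonged linear map on 3-jets:
`(op3 a P) m l l' = Σ_{i,j} a m i j · P i l l' j`. -/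
def op3 (n α β : ℕ) (a : Fin α → Fin β → Fin n → ℂ) :
    (Fin β → Fin n → Fin n → Fin n → ℂ) →ₗ[ℂ] (Fin α → Fin n → Fin n → ℂ) where
  toFun P := fun m l l' => ∑ i, ∑ j, a m i j * P i l l' j
  map_add' P Q := by
    funext m l l'
    simp only [Pi.add_apply]
    rw [← Finset.sum_add_distrib]
    refine Finset.sum_congr rfl fun i _ => ?_
    rw [← Finset.sum_add_distrib]
    exact Finset.sum_congr rfl fun j _ => by ring
  map_smul' c P := by
    funext m l l'
    simp only [Pi.smul_apply, smul_eq_mul, RingHom.id_apply]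
    rw [Finset.mul_sum]
    refine Finset.sum_congr rfl fun i _ => ?_
    rw [Finset.mul_sum]
    exact Finset.sum_congr rfl fun j _ => by ring

/-- `S^β_2`: the space of `β`-vector-valued homogeneous 2-jets in `n` variables, i.e.
families `P i j k` symmetric in the two lower indices `j, k`. -/
def Sym2Sub (n β : ℕ) : Submodule ℂ (Fin β → Fin n → Fin n → ℂ) where
  carrier := {P | ∀ i j k, P i j k = P i k j}
  add_mem' := by
    intro P Q hP hQ i j k
    simp only [Pi.add_apply, hP i j k, hQ i j k]
  zero_mem' := by intro i j k; rfl
  smul_mem' := by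
    intro c P hP i j k
    simp only [Pi.smul_apply, hP i j k]

/-- `S^β_3`: the space of `β`-vector-valued homogeneous 3-jets in `n` variables, i.e.
families `P i j k l` symmetric under all permutations of the lower indices `j, k, l`. -/
def Sym3Sub (n β : ℕ) : Submodule ℂ (Fin β → Fin n → Fin n → Fin n → ℂ) where
  carrier := {P | (∀ i j k l, P i j k l = P i k j l) ∧ (∀ i j k l, P i j k l = P i j l k) ∧
    (∀ i j k l, P i j k l = P i l k j)}
  add_mem' := by
    rintro P Q ⟨hP1, hP2, hP3⟩ ⟨hQ1, hQ2, hQ3⟩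
    exact ⟨fun i j k l => by simp only [Pi.add_apply, hP1 i j k l, hQ1 i j k l],
      fun i j k l => by simp only [Pi.add_apply, hP2 i j k l, hQ2 i j k l],
      fun i j k l => by simp only [Pi.add_apply, hP3 i j k l, hQ3 i j k l]⟩
  zero_mem' := ⟨fun _ _ _ _ => rfl, fun _ _ _ _ => rfl, fun _ _ _ _ => rfl⟩
  smul_mem' := by
    rintro c P ⟨hP1, hP2, hP3⟩
    exact ⟨fun i j k l => by simp only [Pi.smul_apply, hP1 i j k l],
      fun i j k l => by simp only [Pi.smul_apply, hP2 i j k l],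
      fun i j k l => by simp only [Pi.smul_apply, hP3 i j k l]⟩

/-- The subspace of 1-jets `P i j` vanishing whenever the lower index `j` is one of the
first `r` variables (`j.1 < r` in zero-indexed notation, i.e. `j ≤ r` one-indexed). -/
def Van1 (n β : ℕ) (r : ℕ) : Submodule ℂ (Fin β → Fin n → ℂ) where
  carrier := {P | ∀ i j, j.1 < r → P i j = 0}
  add_mem' := by
    intro P Q hP hQ i j hj
    simp only [Pi.add_apply, hP i j hj, hQ i j hj, add_zero]
  zero_mem' := by intro i j hj; rfl
  smul_mem' := by
    intro c P hP i j hj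
    simp only [Pi.smul_apply, hP i j hj, smul_zero]

/-- The subspace of 2-jets `P i j k` vanishing whenever some lower index is one of the
first `r` variables. -/
def Van2 (n β : ℕ) (r : ℕ) : Submodule ℂ (Fin β → Fin n → Fin n → ℂ) where
  carrier := {P | ∀ i j k, j.1 < r ∨ k.1 < r → P i j k = 0}
  add_mem' := by
    intro P Q hP hQ i j k hjk
    simp only [Pi.add_apply, hP i j k hjk, hQ i j k hjk, add_zero]
  zero_mem' := by intro i j k hjk; rfl
  smul_mem' := by
    intro c P hP i j k hjk
    simp only [Pi.smul_apply, hP i j k hjk, smul_zero]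


/-- A `k`-regular sequence for the system `A` (Definition 4.1), zero-indexed: `R l i j`
is the paper's `P^i_{(l+1)(j+1)}`; for each `l` and `m` one requires
`Σ_i Σ_{j<l} a(m,i,j)·R_j(i,l) + Σ_i Σ_{j≥l} a(m,i,j)·R_l(i,j) = 0`
(for `l = 0` this says `R₀ ∈ A⁰`). -/
def kRegular (n α β : ℕ) (a : Fin α → Fin β → Fin n → ℂ) (k : ℕ) (hk : k ≤ n)
    (R : Fin k → Fin β → Fin n → ℂ) : Prop :=
  ∀ l : Fin k, ∀ m : Fin α,
    ∑ i : Fin β, ∑ j : Fin n,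
      a m i j *
        (if h : j.1 < l.1 then R ⟨j.1, h.trans l.isLt⟩ i ⟨l.1, lt_of_lt_of_le l.isLt hk⟩
         else R l i j) = 0

namespace CartanAux

open Module Finset

variable {n α β : ℕ}

/-- Normalization: kill the unused ("junk") entries `R l i j` with `j < l`. -/
def normalize (k : ℕ) (R : Fin k → Fin β → Fin n → ℂ) : Fin k → Fin β → Fin n → ℂ :=
  fun l i j => if j.1 < l.1 then 0 else R l i j

variable (a : Fin α → Fin β → Fin n → ℂ)

/-- The space of normalized `k`-regular sequences. -/
def Reg0 (k : ℕ) (hk : k ≤ n) : Submodule ℂ (Fin k → Fin β → Fin n → ℂ) where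
  carrier := {R | (∀ (l : Fin k) (i : Fin β) (j : Fin n), j.1 < l.1 → R l i j = 0) ∧
    kRegular n α β a k hk R}
  add_mem' := by
    rintro R Q ⟨hR0, hR⟩ ⟨hQ0, hQ⟩
    refine ⟨fun l i j hj => by simp [hR0 l i j hj, hQ0 l i j hj], fun l m => ?_⟩
    have : (∑ i : Fin β, ∑ j : Fin n,
        a m i j * (if h : j.1 < l.1 then (R + Q) ⟨j.1, h.trans l.isLt⟩ i ⟨l.1, lt_of_lt_of_le l.isLt hk⟩
          else (R + Q) l i j)) =
        (∑ i : Fin β, ∑ j : Fin n,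
          a m i j * (if h : j.1 < l.1 then R ⟨j.1, h.trans l.isLt⟩ i ⟨l.1, lt_of_lt_of_le l.isLt hk⟩ else R l i j)) +
        (∑ i : Fin β, ∑ j : Fin n,
          a m i j * (if h : j.1 < l.1 then Q ⟨j.1, h.trans l.isLt⟩ i ⟨l.1, lt_of_lt_of_le l.isLt hk⟩ else Q l i j)) := by
      rw [← Finset.sum_add_distrib]
      refine Finset.sum_congr rfl fun i _ => ?_
      rw [← Finset.sum_add_distrib]
      refine Finset.sum_congr rfl fun j _ => ?_
      split_ifs <;> simp [mul_add]
    rw [this, hR l m, hQ l m, add_zero]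
  zero_mem' := by
    refine ⟨fun l i j hj => rfl, fun l m => ?_⟩
    refine Finset.sum_eq_zero fun i _ => Finset.sum_eq_zero fun j _ => ?_
    split_ifs <;> simp
  smul_mem' := by
    rintro c R ⟨hR0, hR⟩
    refine ⟨fun l i j hj => by simp [hR0 l i j hj], fun l m => ?_⟩
    have : (∑ i : Fin β, ∑ j : Fin n,
        a m i j * (if h : j.1 < l.1 then (c • R) ⟨j.1, h.trans l.isLt⟩ i ⟨l.1, lt_of_lt_of_le l.isLt hk⟩
          else (c • R) l i j)) =
        c * (∑ i : Fin β, ∑ j : Fin n,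
          a m i j * (if h : j.1 < l.1 then R ⟨j.1, h.trans l.isLt⟩ i ⟨l.1, lt_of_lt_of_le l.isLt hk⟩ else R l i j)) := by
      rw [Finset.mul_sum]
      refine Finset.sum_congr rfl fun i _ => ?_
      rw [Finset.mul_sum]
      refine Finset.sum_congr rfl fun j _ => ?_
      split_ifs <;> simp <;> ring
    rw [this, hR l m, mul_zero]

lemma normalize_mem {k : ℕ} (hk : k ≤ n) (R : Fin k → Fin β → Fin n → ℂ)
    (hR : kRegular n α β a k hk R) : normalize k R ∈ Reg0 a k hk := by
  refine ⟨fun l i j hj => if_pos hj, fun l m => ?_⟩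
  have := hR l m
  rw [← this]
  refine Finset.sum_congr rfl fun i _ => Finset.sum_congr rfl fun j _ => ?_
  congr 1
  split_ifs with h
  · show (if (⟨l.1, lt_of_lt_of_le l.isLt hk⟩ : Fin n).1 < j.1 then (0:ℂ)
      else R ⟨j.1, h.trans l.isLt⟩ i ⟨l.1, lt_of_lt_of_le l.isLt hk⟩) = _
    rw [if_neg (by simp; omega)]
  · show (if j.1 < l.1 then (0:ℂ) else R l i j) = R l i j
    rw [if_neg h]

/-- The restriction/projection map `Reg0 (k+1) → Reg0 k`. -/
def prMap (k : ℕ) (hk1 : k + 1 ≤ n) :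
    ↥(Reg0 a (k+1) hk1) →ₗ[ℂ] ↥(Reg0 a k (Nat.le_of_succ_le hk1)) :=
  LinearMap.codRestrict _
    ((LinearMap.funLeft ℂ (Fin β → Fin n → ℂ) Fin.castSucc).comp
      (Submodule.subtype (Reg0 a (k+1) hk1)))
    (by
      rintro ⟨R, hR0, hRreg⟩
      refine ⟨fun l i j hj => hR0 l.castSucc i j hj, fun l m => ?_⟩
      exact hRreg l.castSucc m)

lemma prMap_apply (k : ℕ) (hk1 : k + 1 ≤ n) (R : ↥(Reg0 a (k+1) hk1)) (l : Fin k) :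
    ((prMap a k hk1 R : Fin k → Fin β → Fin n → ℂ)) l = (R : Fin (k+1) → Fin β → Fin n → ℂ) l.castSucc := rfl

/-- Map from `ker (prMap)` to `A⁰_k = ker op1 ⊓ Van1 k`, by evaluation at the last index. -/
def kerMap (k : ℕ) (hk1 : k + 1 ≤ n) :
    ↥(LinearMap.ker (prMap a k hk1)) →ₗ[ℂ]
      ↥(LinearMap.ker (op1 n α β a) ⊓ Van1 n β k) :=
  LinearMap.codRestrict _
    ((LinearMap.proj (Fin.last k)).comp
      ((Submodule.subtype (Reg0 a (k+1) hk1)).comp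
        (Submodule.subtype (LinearMap.ker (prMap a k hk1)))))
    (by
      rintro ⟨⟨R, hR0, hRreg⟩, hker⟩
      have hc : ∀ l : Fin k, R l.castSucc = 0 := by
        intro l
        exact congrFun (congrArg Subtype.val hker) l
      refine Submodule.mem_inf.mpr ⟨?_, ?_⟩
      · -- ker op1
        show R (Fin.last k) ∈ LinearMap.ker (op1 n α β a)
        rw [LinearMap.mem_ker]
        funext m
        have hre := hRreg (Fin.last k) m
        show (∑ i : Fin β, ∑ j : Fin n, a m i j * R (Fin.last k) i j) = 0
        rw [← hre]
        refine Finset.sum_congr rfl fun i _ => Finset.sum_congr rfl fun j _ => ?_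
        congr 1
        split_ifs with h
        · have h1 : R (Fin.last k) i j = 0 := hR0 (Fin.last k) i j h
          have h2 : R ⟨j.1, by omega⟩ i ⟨(Fin.last k).1, by omega⟩ = 0 :=
            congrFun (congrFun (hc ⟨j.1, h⟩) i) _
          rw [h1]; exact h2.symm
        · rfl
      · -- Van1
        show R (Fin.last k) ∈ Van1 n β k
        intro i j hj
        exact hR0 (Fin.last k) i j hj)

lemma kerMap_bijective (k : ℕ) (hk1 : k + 1 ≤ n) :
    Function.Bijective (kerMap a k hk1) := by
  constructor
  · rw [← LinearMap.ker_eq_bot (M := ↥(LinearMap.ker (prMap a k hk1)))]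
    rw [LinearMap.ker_eq_bot']
    rintro ⟨⟨R, hR0, hRreg⟩, hker⟩ hz
    have hc : ∀ l : Fin k, R l.castSucc = 0 := by
      intro l
      exact congrFun (congrArg Subtype.val hker) l
    have hlast : R (Fin.last k) = 0 := congrArg Subtype.val hz
    apply Subtype.ext
    apply Subtype.ext
    funext l i j
    show R l i j = 0
    rcases Fin.eq_castSucc_or_eq_last l with ⟨l', rfl⟩ | rfl
    · exact congrFun (congrFun (hc l') i) j
    · exact congrFun (congrFun hlast i) j
  · rintro ⟨S, hS⟩
    have hS1 : S ∈ LinearMap.ker (op1 n α β a) := hS.1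
    have hS2 : ∀ (i : Fin β) (j : Fin n), j.1 < k → S i j = 0 := hS.2
    let R : Fin (k+1) → Fin β → Fin n → ℂ := fun l => if l.1 < k then 0 else S
    have hR1 : ∀ l : Fin (k+1), l.1 < k → R l = 0 := fun l h => if_pos h
    have hR2 : ∀ l : Fin (k+1), ¬ l.1 < k → R l = S := fun l h => if_neg h
    have hop : ∀ m, (∑ i : Fin β, ∑ j : Fin n, a m i j * S i j) = 0 := by
      intro m
      exact congrFun (LinearMap.mem_ker.mp hS1) m
    have hRmem : R ∈ Reg0 a (k+1) hk1 := by
      constructor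
      · intro l i j hj
        by_cases h : l.1 < k
        · rw [hR1 l h]; rfl
        · rw [hR2 l h]
          exact hS2 i j (by omega)
      · intro l m
        by_cases h : l.1 < k
        · refine Finset.sum_eq_zero fun i _ => Finset.sum_eq_zero fun j _ => ?_
          rw [mul_eq_zero]; right
          split_ifs with hj
          · have : R ⟨j.1, hj.trans l.isLt⟩ = 0 := hR1 _ (Nat.lt_trans hj h)
            rw [this]; rfl
          · rw [hR1 l h]; rfl
        · rw [← hop m]
          refine Finset.sum_congr rfl fun i _ => Finset.sum_congr rfl fun j _ => ?_
          congr 1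
          split_ifs with hj
          · have h0 : R ⟨j.1, hj.trans l.isLt⟩ = 0 := hR1 _ (by omega : j.1 < k)
            rw [h0]
            have : S i j = 0 := hS2 i j (by omega)
            rw [this]; rfl
          · rw [hR2 l h]
    have hkerm : (⟨R, hRmem⟩ : ↥(Reg0 a (k+1) hk1)) ∈ LinearMap.ker (prMap a k hk1) := by
      rw [LinearMap.mem_ker]
      apply Subtype.ext
      funext l
      show R l.castSucc = 0
      exact hR1 _ (by simpa using l.isLt)
    refine ⟨⟨⟨R, hRmem⟩, hkerm⟩, ?_⟩
    apply Subtype.ext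
    show R (Fin.last k) = S
    exact hR2 _ (by simp)

/-- Evaluation at 0 : `Reg0 1 → A⁰`. -/
def baseMap (h1 : 1 ≤ n) :
    ↥(Reg0 a 1 h1) →ₗ[ℂ] ↥(LinearMap.ker (op1 n α β a)) :=
  LinearMap.codRestrict _
    ((LinearMap.proj (0 : Fin 1)).comp (Submodule.subtype (Reg0 a 1 h1)))
    (by
      rintro ⟨R, hR0, hRreg⟩
      show R 0 ∈ LinearMap.ker (op1 n α β a)
      rw [LinearMap.mem_ker]
      funext m
      have hre := hRreg 0 m
      show (∑ i : Fin β, ∑ j : Fin n, a m i j * R 0 i j) = 0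
      rw [← hre]
      refine Finset.sum_congr rfl fun i _ => Finset.sum_congr rfl fun j _ => ?_
      congr 1)

lemma baseMap_bijective (h1 : 1 ≤ n) : Function.Bijective (baseMap a h1) := by
  constructor
  · rw [← LinearMap.ker_eq_bot (M := ↥(Reg0 a 1 h1)), LinearMap.ker_eq_bot']
    rintro ⟨R, hR⟩ hz
    have h0 : R 0 = 0 := congrArg Subtype.val hz
    apply Subtype.ext
    funext l
    rw [Subsingleton.elim l (0 : Fin 1)]
    exact h0
  · rintro ⟨S, hS⟩
    have hop : ∀ m, (∑ i : Fin β, ∑ j : Fin n, a m i j * S i j) = 0 := fun m =>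
      congrFun (LinearMap.mem_ker.mp hS) m
    have hmem : (fun _ : Fin 1 => S) ∈ Reg0 a 1 h1 := by
      constructor
      · intro l i j hj
        exact absurd hj (by omega)
      · intro l m
        rw [← hop m]
        refine Finset.sum_congr rfl fun i _ => Finset.sum_congr rfl fun j _ => ?_
        congr 1
        rw [dif_neg (by omega : ¬ j.1 < (l : ℕ))]
    exact ⟨⟨fun _ => S, hmem⟩, rfl⟩

/-- The symmetrization map from `n`-regular sequences to 2-jets. -/
def Psi : (Fin n → Fin β → Fin n → ℂ) →ₗ[ℂ] (Fin β → Fin n → Fin n → ℂ) where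
  toFun R := fun i j l => if j.1 ≤ l.1 then R j i l else R l i j
  map_add' R Q := by
    funext i j l
    show (if j.1 ≤ l.1 then (R + Q) j i l else (R + Q) l i j) =
      (if j.1 ≤ l.1 then R j i l else R l i j) + (if j.1 ≤ l.1 then Q j i l else Q l i j)
    split_ifs <;> simp
  map_smul' c R := by
    funext i j l
    show (if j.1 ≤ l.1 then (c • R) j i l else (c • R) l i j) =
      c • (if j.1 ≤ l.1 then R j i l else R l i j)
    split_ifs <;> simp

/-- `Reg0 n → A¹`. -/
def topMap :
    ↥(Reg0 a n le_rfl) →ₗ[ℂ] ↥(Sym2Sub n β ⊓ LinearMap.ker (op2 n α β a)) :=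
  LinearMap.codRestrict _ (Psi.comp (Submodule.subtype (Reg0 a n le_rfl)))
    (by
      rintro ⟨R, hR0, hRreg⟩
      refine Submodule.mem_inf.mpr ⟨?_, ?_⟩
      · show Psi R ∈ Sym2Sub n β
        intro i j l
        show (if j.1 ≤ l.1 then R j i l else R l i j) =
          (if l.1 ≤ j.1 then R l i j else R j i l)
        split_ifs with h1 h2 h3
        · have : j = l := Fin.ext (le_antisymm h1 h2)
          rw [this]
        · rfl
        · rfl
        · omega
      · show Psi R ∈ LinearMap.ker (op2 n α β a)
        rw [LinearMap.mem_ker]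
        funext m l
        have hre := hRreg l m
        show (∑ i : Fin β, ∑ j : Fin n, a m i j * (if l.1 ≤ j.1 then R l i j else R j i l)) = 0
        rw [← hre]
        refine Finset.sum_congr rfl fun i _ => Finset.sum_congr rfl fun j _ => ?_
        congr 1
        split_ifs with h1 h2 h3
        · omega
        · rfl
        · rfl
        · omega)

lemma topMap_bijective : Function.Bijective (topMap a) := by
  constructor
  · rw [← LinearMap.ker_eq_bot (M := ↥(Reg0 a n le_rfl)), LinearMap.ker_eq_bot']
    rintro ⟨R, hR0, hRreg⟩ hz
    have hP : Psi R = 0 := congrArg Subtype.val hz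
    apply Subtype.ext
    funext l i j
    show R l i j = 0
    by_cases h : l.1 ≤ j.1
    · have := congrFun (congrFun (congrFun hP i) l) j
      rw [show Psi R i l j = R l i j from if_pos h] at this
      exact this
    · exact hR0 l i j (by omega)
  · rintro ⟨P, hP⟩
    have hsym : ∀ i j k, P i j k = P i k j := hP.1
    have hker : ∀ m l, (∑ i : Fin β, ∑ j : Fin n, a m i j * P i l j) = 0 := fun m l =>
      congrFun (congrFun (LinearMap.mem_ker.mp hP.2) m) l
    let R : Fin n → Fin β → Fin n → ℂ := fun l i j => if l.1 ≤ j.1 then P i l j else 0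
    have hRpos : ∀ (l j : Fin n) (i : Fin β), l.1 ≤ j.1 → R l i j = P i l j :=
      fun l j i h => if_pos h
    have hRneg : ∀ (l j : Fin n) (i : Fin β), ¬ l.1 ≤ j.1 → R l i j = 0 :=
      fun l j i h => if_neg h
    have hmem : R ∈ Reg0 a n le_rfl := by
      constructor
      · intro l i j hj
        exact hRneg l j i (by omega)
      · intro l m
        rw [← hker m l]
        refine Finset.sum_congr rfl fun i _ => Finset.sum_congr rfl fun j _ => ?_
        congr 1
        split_ifs with h
        · exact (hRpos j l i (le_of_lt h)).trans (hsym i j l)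
        · exact hRpos l j i (by omega)
    refine ⟨⟨R, hmem⟩, ?_⟩
    apply Subtype.ext
    show Psi R = P
    funext i j l
    show (if j.1 ≤ l.1 then R j i l else R l i j) = P i j l
    split_ifs with h
    · exact hRpos j l i h
    · exact (hRpos l j i (by omega)).trans (hsym i l j)


open Module

def gdim (k : ℕ) : ℕ := if h : k ≤ n then finrank ℂ ↥(Reg0 a k h) else 0

def rdim (k : ℕ) : ℕ :=
  if h : k + 1 ≤ n then finrank ℂ ↥(LinearMap.range (prMap a k h)) else 0

def ddim (k : ℕ) : ℕ := finrank ℂ ↥(LinearMap.ker (op1 n α β a) ⊓ Van1 n β k)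

set_option synthInstance.maxHeartbeats 1000000 in
lemma rank_nullity_step (k : ℕ) (hk1 : k + 1 ≤ n) :
    gdim a (k + 1) = rdim a k + ddim a k := by
  have e := LinearEquiv.ofBijective (kerMap a k hk1) (kerMap_bijective a k hk1)
  have h1 : finrank ℂ ↥(LinearMap.ker (prMap a k hk1)) = ddim a k := e.finrank_eq
  have h2 := LinearMap.finrank_range_add_finrank_ker (prMap a k hk1)
  simp only [gdim, rdim]
  rw [dif_pos hk1, dif_pos hk1]
  omega

lemma rdim_le (k : ℕ) (hk1 : k + 1 ≤ n) : rdim a k ≤ gdim a k := by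
  simp only [gdim, rdim]
  rw [dif_pos hk1, dif_pos (Nat.le_of_succ_le hk1)]
  exact Submodule.finrank_le _

lemma surj_iff (k : ℕ) (hk1 : k + 1 ≤ n) :
    Function.Surjective (prMap a k hk1) ↔ rdim a k = gdim a k := by
  simp only [gdim, rdim]
  rw [dif_pos hk1, dif_pos (Nat.le_of_succ_le hk1)]
  constructor
  · intro h
    rw [LinearMap.range_eq_top.mpr h, finrank_top]
  · intro h
    exact LinearMap.range_eq_top.mp (Submodule.eq_top_of_finrank_eq h)

lemma telescope (p : ℕ) (hp : p + 1 ≤ n) :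
    gdim a (p + 1) + ∑ k ∈ Finset.Icc 1 p, (gdim a k - rdim a k) =
      gdim a 1 + ∑ k ∈ Finset.Icc 1 p, ddim a k := by
  induction p with
  | zero => simp
  | succ q IH =>
    have IH' := IH (by omega)
    rw [Finset.sum_Icc_succ_top (by omega : 1 ≤ q + 1),
      Finset.sum_Icc_succ_top (by omega : 1 ≤ q + 1)]
    have h1 := rank_nullity_step a (q + 1) hp
    have h2 := rdim_le a (q + 1) hp
    omega

lemma surj_of_ext (k : ℕ) (hk1 : k + 1 ≤ n)
    (H : ∀ R : Fin k → Fin β → Fin n → ℂ,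
      kRegular n α β a k (Nat.le_of_succ_le hk1) R →
      ∃ R' : Fin (k + 1) → Fin β → Fin n → ℂ,
        (∀ l : Fin k, R' l.castSucc = R l) ∧ kRegular n α β a (k + 1) hk1 R') :
    Function.Surjective (prMap a k hk1) := by
  rintro ⟨R, hR0, hRreg⟩
  obtain ⟨R', hcast, hreg'⟩ := H R hRreg
  refine ⟨⟨normalize (k + 1) R', normalize_mem a hk1 R' hreg'⟩, ?_⟩
  apply Subtype.ext
  funext l i j
  show (if j.1 < (l.castSucc : Fin (k + 1)).1 then 0 else R' l.castSucc i j) = R l i j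
  simp only [Fin.coe_castSucc]
  by_cases h : j.1 < l.1
  · rw [if_pos h]
    exact (hR0 l i j h).symm
  · rw [if_neg h]
    exact congrFun (congrFun (hcast l) i) j

lemma ext_of_surj (k : ℕ) (hk1' : k + 1 ≤ n)
    (hsurj : Function.Surjective (prMap a k hk1'))
    (hk : k ≤ n) (hk1 : k + 1 ≤ n) (R : Fin k → Fin β → Fin n → ℂ)
    (hR : kRegular n α β a k hk R) :
    ∃ R' : Fin (k + 1) → Fin β → Fin n → ℂ,
      (∀ l : Fin k, R' l.castSucc = R l) ∧ kRegular n α β a (k + 1) hk1 R' := by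
  have hN : normalize k R ∈ Reg0 a k (Nat.le_of_succ_le hk1') :=
    normalize_mem a (Nat.le_of_succ_le hk1') R hR
  obtain ⟨Q, hQ⟩ := hsurj ⟨normalize k R, hN⟩
  obtain ⟨QR, hQ0, hQreg⟩ := Q
  have hQc : ∀ l : Fin k, QR l.castSucc = normalize k R l :=
    fun l => congrFun (congrArg Subtype.val hQ) l
  let R' : Fin (k + 1) → Fin β → Fin n → ℂ :=
    fun l => if h : l.1 < k then R ⟨l.1, h⟩ else QR l
  have hR'pos : ∀ (l : Fin (k + 1)) (h : l.1 < k), R' l = R ⟨l.1, h⟩ :=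
    fun l h => dif_pos h
  have hR'neg : ∀ l : Fin (k + 1), ¬ l.1 < k → R' l = QR l := fun l h => dif_neg h
  refine ⟨R', fun l => ?_, fun l m => ?_⟩
  · rw [hR'pos l.castSucc (by simpa using l.isLt)]
    exact congrArg R (Fin.ext (by simp))
  · have hq := hQreg l m
    rw [← hq]
    refine Finset.sum_congr rfl fun i _ => Finset.sum_congr rfl fun j _ => ?_
    congr 1
    split_ifs with hj
    · have h' : j.1 < k := by
        have := l.isLt
        omega
      rw [hR'pos ⟨j.1, hj.trans l.isLt⟩ h']
      have e1 := congrFun (congrFun (hQc ⟨j.1, h'⟩) i)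
        (⟨l.1, lt_of_lt_of_le l.isLt hk1⟩ : Fin n)
      have e2 : normalize k R ⟨j.1, h'⟩ i (⟨l.1, lt_of_lt_of_le l.isLt hk1⟩ : Fin n) =
          R ⟨j.1, h'⟩ i ⟨l.1, lt_of_lt_of_le l.isLt hk1⟩ :=
        if_neg (Nat.not_lt.mpr (le_of_lt hj))
      exact (e1.trans e2).symm
    · by_cases h : l.1 < k
      · rw [hR'pos l h]
        have e1 := congrFun (congrFun (hQc ⟨l.1, h⟩) i) j
        have e2 : normalize k R ⟨l.1, h⟩ i j = R ⟨l.1, h⟩ i j := if_neg hj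
        exact (e1.trans e2).symm
      · rw [hR'neg l h]

end CartanAux
/-- Proposition 4.4: the first-order constant-coefficient system `A` given by
`Σ_{i,j} a(m,i,j) ∂P^i/∂x_j = 0` is in involution (every `k`-regular sequence with
`1 ≤ k ≤ n−1` extends to a `(k+1)`-regular sequence) if and only if its tableau is in
involution in the sense of Cartan, i.e.
`dim A¹ = dim A⁰ + Σ_{r=1}^{n−1} dim A⁰_r`. -/
theorem involution_iff_cartan (n α β : ℕ) (hn : 0 < n) (hα : 0 < α) (hβ : 0 < β)
    (a : Fin α → Fin β → Fin n → ℂ) :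
    (∀ k, 1 ≤ k → k ≤ n - 1 →
      ∀ (hk : k ≤ n) (hk1 : k + 1 ≤ n) (R : Fin k → Fin β → Fin n → ℂ),
        kRegular n α β a k hk R →
        ∃ R' : Fin (k + 1) → Fin β → Fin n → ℂ,
          (∀ l : Fin k, R' l.castSucc = R l) ∧ kRegular n α β a (k + 1) hk1 R') ↔
    Module.finrank ℂ ↥(Sym2Sub n β ⊓ LinearMap.ker (op2 n α β a)) =
      Module.finrank ℂ ↥(LinearMap.ker (op1 n α β a)) +
        ∑ r ∈ Finset.Icc 1 (n - 1),
          Module.finrank ℂ ↥(LinearMap.ker (op1 n α β a) ⊓ Van1 n β r) := by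
  classical
  open CartanAux Module in
  have hTop : gdim a n =
      finrank ℂ ↥(Sym2Sub n β ⊓ LinearMap.ker (op2 n α β a)) := by
    simp only [CartanAux.gdim]
    rw [dif_pos (le_refl n)]
    exact (LinearEquiv.ofBijective (CartanAux.topMap a)
      (CartanAux.topMap_bijective a)).finrank_eq
  open CartanAux Module in
  have hBase : gdim a 1 = finrank ℂ ↥(LinearMap.ker (op1 n α β a)) := by
    simp only [CartanAux.gdim]
    rw [dif_pos (show 1 ≤ n from hn)]
    exact (LinearEquiv.ofBijective (CartanAux.baseMap a hn)
      (CartanAux.baseMap_bijective a hn)).finrank_eq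
  have hT := CartanAux.telescope a (n - 1) (by omega)
  rw [show n - 1 + 1 = n from by omega] at hT
  constructor
  · intro hinv
    have hzero : ∑ k ∈ Finset.Icc 1 (n - 1),
        (CartanAux.gdim a k - CartanAux.rdim a k) = 0 := by
      refine Finset.sum_eq_zero fun k hkmem => ?_
      rw [Finset.mem_Icc] at hkmem
      have hk1 : k + 1 ≤ n := by omega
      have hs : Function.Surjective (CartanAux.prMap a k hk1) :=
        CartanAux.surj_of_ext a k hk1
          (fun R hR => hinv k hkmem.1 hkmem.2 (Nat.le_of_succ_le hk1) hk1 R hR)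
      have := (CartanAux.surj_iff a k hk1).mp hs
      omega
    rw [← hTop, ← hBase]
    show CartanAux.gdim a n =
      CartanAux.gdim a 1 + ∑ r ∈ Finset.Icc 1 (n - 1), CartanAux.ddim a r
    omega
  · intro hid k h1 h2 hk hk1 R hR
    have hk1' : k + 1 ≤ n := by omega
    have hgn : CartanAux.gdim a n =
        CartanAux.gdim a 1 + ∑ r ∈ Finset.Icc 1 (n - 1), CartanAux.ddim a r := by
      rw [hTop, hBase]
      exact hid
    have hzero : ∑ j ∈ Finset.Icc 1 (n - 1),
        (CartanAux.gdim a j - CartanAux.rdim a j) = 0 := by omega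
    have hterm := (Finset.sum_eq_zero_iff.mp hzero) k (Finset.mem_Icc.mpr ⟨h1, h2⟩)
    have hle := CartanAux.rdim_le a k hk1'
    have heq : CartanAux.rdim a k = CartanAux.gdim a k := by omega
    have hs := (CartanAux.surj_iff a k hk1').mpr heq
    exact CartanAux.ext_of_surj a k hk1' hs hk hk1 R hR

end
end

section
/- Fix positive integers n, α, β, γ and constant coefficients a(m,i,j) ∈ ℂ (m ≤ α, i ≤ β, j ≤ n) and b(m,i,j) ∈ ℂ (m ≤ γ, i ≤ α, j ≤ n). Assume: (H1) ker ℬ = range 𝒜¹ (exactness of S^β_2 → S^α_1 → S^γ_0); (H2) dim A¹ = dim A⁰ + Σ_{r=1}^{n−1} dim A⁰_r; (H2') dim A² = dim A¹ + Σ_{r=1}^{n−1} dim A¹_r. Then dim B¹ = dim B⁰ + Σ_{r=1}^{n−1} dim B⁰_r holds if and only if dim B⁰_r = dim S^β_{2,r} − dim A¹_r for every r ∈ {1,…,n−1}. -/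
noncomputable section

namespace TorsionAux

open Module Submodule LinearMap Finset

/-- The subspace of 3-jets vanishing whenever some lower index is among the first `r`. -/
def Van3 (n β : ℕ) (r : ℕ) : Submodule ℂ (Fin β → Fin n → Fin n → Fin n → ℂ) where
  carrier := {P | ∀ i j k l, j.1 < r ∨ k.1 < r ∨ l.1 < r → P i j k l = 0}
  add_mem' := by
    intro P Q hP hQ i j k l h
    simp only [Pi.add_apply, hP i j k l h, hQ i j k l h, add_zero]
  zero_mem' := by intro i j k l h; rfl
  smul_mem' := by
    intro c P hP i j k l h
    simp only [Pi.smul_apply, hP i j k l h, smul_zero]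

/-- Slicing a 2-jet at lower index `l`. -/
def sl2 (n β : ℕ) (l : Fin n) : (Fin β → Fin n → Fin n → ℂ) →ₗ[ℂ] (Fin β → Fin n → ℂ) where
  toFun P := fun i j => P i l j
  map_add' _ _ := rfl
  map_smul' _ _ := rfl

/-- Slicing a 3-jet at its first lower index `l`. -/
def sl3 (n β : ℕ) (l : Fin n) :
    (Fin β → Fin n → Fin n → Fin n → ℂ) →ₗ[ℂ] (Fin β → Fin n → Fin n → ℂ) where
  toFun P := fun i x y => P i l x y
  map_add' _ _ := rfl
  map_smul' _ _ := rfl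

lemma op1_apply (n α β : ℕ) (a : Fin α → Fin β → Fin n → ℂ) (P : Fin β → Fin n → ℂ) (m : Fin α) :
    op1 n α β a P m = ∑ i, ∑ j, a m i j * P i j := rfl

lemma op2_apply (n α β : ℕ) (a : Fin α → Fin β → Fin n → ℂ) (P : Fin β → Fin n → Fin n → ℂ)
    (m : Fin α) (l : Fin n) : op2 n α β a P m l = ∑ i, ∑ j, a m i j * P i l j := rfl

lemma op3_apply (n α β : ℕ) (a : Fin α → Fin β → Fin n → ℂ)
    (P : Fin β → Fin n → Fin n → Fin n → ℂ) (m : Fin α) (l l' : Fin n) :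
    op3 n α β a P m l l' = ∑ i, ∑ j, a m i j * P i l l' j := rfl

lemma sl2_apply (n β : ℕ) (l : Fin n) (P : Fin β → Fin n → Fin n → ℂ) (i : Fin β) (j : Fin n) :
    sl2 n β l P i j = P i l j := rfl

lemma sl3_apply (n β : ℕ) (l : Fin n) (P : Fin β → Fin n → Fin n → Fin n → ℂ) (i : Fin β)
    (x y : Fin n) : sl3 n β l P i x y = P i l x y := rfl

lemma mem_Sym2 (n β : ℕ) (P : Fin β → Fin n → Fin n → ℂ) :
    P ∈ Sym2Sub n β ↔ ∀ i j k, P i j k = P i k j := Iff.rfl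

lemma mem_Sym3 (n β : ℕ) (P : Fin β → Fin n → Fin n → Fin n → ℂ) :
    P ∈ Sym3Sub n β ↔ (∀ i j k l, P i j k l = P i k j l) ∧ (∀ i j k l, P i j k l = P i j l k) ∧
      (∀ i j k l, P i j k l = P i l k j) := Iff.rfl

lemma mem_Van1 (n β r : ℕ) (P : Fin β → Fin n → ℂ) :
    P ∈ Van1 n β r ↔ ∀ i j, j.1 < r → P i j = 0 := Iff.rfl

lemma mem_Van2 (n β r : ℕ) (P : Fin β → Fin n → Fin n → ℂ) :
    P ∈ Van2 n β r ↔ ∀ i j k, j.1 < r ∨ k.1 < r → P i j k = 0 := Iff.rfl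

lemma mem_Van3 (n β r : ℕ) (P : Fin β → Fin n → Fin n → Fin n → ℂ) :
    P ∈ Van3 n β r ↔ ∀ i j k l, j.1 < r ∨ k.1 < r ∨ l.1 < r → P i j k l = 0 := Iff.rfl

lemma Van1_zero (n β : ℕ) : Van1 n β 0 = ⊤ := by
  ext P; simp [mem_Van1]

lemma Van2_zero (n β : ℕ) : Van2 n β 0 = ⊤ := by
  ext P; simp [mem_Van2]

lemma Van3_zero (n β : ℕ) : Van3 n β 0 = ⊤ := by
  ext P; simp [mem_Van3]

lemma Van2_n (n β : ℕ) : Van2 n β n = ⊥ := by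
  ext P
  simp only [mem_Van2, Submodule.mem_bot]
  constructor
  · intro h; funext i j k; exact h i j k (Or.inl j.2)
  · intro h i j k _; rw [h]; rfl

lemma Van3_n (n β : ℕ) : Van3 n β n = ⊥ := by
  ext P
  simp only [mem_Van3, Submodule.mem_bot]
  constructor
  · intro h; funext i j k l; exact h i j k l (Or.inl j.2)
  · intro h i j k l _; rw [h]; rfl

/-- One step of the telescoping dimension count. -/
lemma tele_step {V U : Type*} [AddCommGroup V] [Module ℂ V] [FiniteDimensional ℂ V]
    [AddCommGroup U] [Module ℂ U]
    (W W' : Submodule ℂ V) (f : V →ₗ[ℂ] U) (hle : W' ≤ W)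
    (hker : ∀ x ∈ W, (f x = 0 ↔ x ∈ W')) :
    Module.finrank ℂ W = Module.finrank ℂ (W.map f) + Module.finrank ℂ W' := by
  have h := LinearMap.finrank_range_add_finrank_ker (f.domRestrict W)
  rw [LinearMap.range_domRestrict] at h
  have hk : LinearMap.ker (f.domRestrict W) = Submodule.comap W.subtype W' := by
    ext x
    simp only [LinearMap.mem_ker, LinearMap.domRestrict_apply, Submodule.mem_comap,
      Submodule.subtype_apply]
    exact hker x.1 x.2
  rw [hk, (Submodule.comapSubtypeEquivOfLe hle).finrank_eq] at h
  omega

/-- Telescoping dimension count along a decreasing chain of subspaces. -/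
lemma tele_sum {V U : Type*} [AddCommGroup V] [Module ℂ V] [FiniteDimensional ℂ V]
    [AddCommGroup U] [Module ℂ U]
    (n : ℕ) (W : ℕ → Submodule ℂ V) (f : ℕ → V →ₗ[ℂ] U)
    (hWn : W n = ⊥) (hle : ∀ r, W (r + 1) ≤ W r)
    (hker : ∀ r, r < n → ∀ x ∈ W r, (f r x = 0 ↔ x ∈ W (r + 1))) :
    Module.finrank ℂ (W 0) = ∑ r ∈ Finset.range n, Module.finrank ℂ ((W r).map (f r)) := by
  have aux : ∀ k : ℕ, Module.finrank ℂ (W (n - k)) =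
      ∑ r ∈ Finset.Ico (n - k) n, Module.finrank ℂ ((W r).map (f r)) := by
    intro k
    induction k with
    | zero => simp [hWn]
    | succ k ih =>
      by_cases h : n ≤ k
      · have e : n - (k + 1) = n - k := by omega
        rw [e]; exact ih
      · have hk : n - (k + 1) < n := by omega
        have e : n - k = n - (k + 1) + 1 := by omega
        rw [Finset.sum_eq_sum_Ico_succ_bot hk,
          tele_step (W (n - (k + 1))) (W (n - (k + 1) + 1)) (f (n - (k + 1))) (hle _)
            (hker _ hk), ← e, ih]
  have h := aux n
  rw [Nat.sub_self, ← Finset.range_eq_Ico] at h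
  exact h

lemma range_split (n : ℕ) (hn : 0 < n) (d : ℕ → ℕ) :
    ∑ r ∈ Finset.range n, d r = d 0 + ∑ r ∈ Finset.Icc 1 (n - 1), d r := by
  have h : Finset.range n = insert 0 (Finset.Icc 1 (n - 1)) := by
    ext x; simp only [Finset.mem_range, Finset.mem_insert, Finset.mem_Icc]; omega
  rw [h, Finset.sum_insert (by simp)]

/-- Rank–nullity for the restriction of a map to a submodule. -/
lemma rn {V U : Type*} [AddCommGroup V] [Module ℂ V] [FiniteDimensional ℂ V]
    [AddCommGroup U] [Module ℂ U] (f : V →ₗ[ℂ] U) (p : Submodule ℂ V) :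
    Module.finrank ℂ p = Module.finrank ℂ (p.map f) +
      Module.finrank ℂ (p ⊓ LinearMap.ker f : Submodule ℂ V) := by
  have h := LinearMap.finrank_range_add_finrank_ker (f.domRestrict p)
  rw [LinearMap.range_domRestrict] at h
  have hk : LinearMap.ker (f.domRestrict p) =
      Submodule.comap p.subtype (p ⊓ LinearMap.ker f) := by
    ext x
    simp only [LinearMap.mem_ker, LinearMap.domRestrict_apply, Submodule.mem_comap,
      Submodule.subtype_apply, Submodule.mem_inf]
    exact ⟨fun h' => ⟨x.2, h'⟩, fun h' => h'.2⟩
  rw [hk, (Submodule.comapSubtypeEquivOfLe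
    (inf_le_left : p ⊓ LinearMap.ker f ≤ p)).finrank_eq] at h
  omega

/-- Quasi-regularity of the coordinates for the tableau `A`, extracted from (H2). -/
lemma quasireg (n α β : ℕ) (hn : 0 < n) (a : Fin α → Fin β → Fin n → ℂ)
    (H2 : Module.finrank ℂ ↥(Sym2Sub n β ⊓ LinearMap.ker (op2 n α β a)) =
      Module.finrank ℂ ↥(LinearMap.ker (op1 n α β a)) +
        ∑ r ∈ Finset.Icc 1 (n - 1),
          Module.finrank ℂ ↥(LinearMap.ker (op1 n α β a) ⊓ Van1 n β r)) :
    ∀ (r : Fin n) (u : Fin β → Fin n → ℂ),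
      u ∈ LinearMap.ker (op1 n α β a) ⊓ Van1 n β r.1 →
      ∃ P ∈ (Sym2Sub n β ⊓ LinearMap.ker (op2 n α β a)) ⊓ Van2 n β r.1,
        ∀ i j, P i r j = u i j := by
  set W : ℕ → Submodule ℂ (Fin β → Fin n → Fin n → ℂ) :=
    fun r => Sym2Sub n β ⊓ LinearMap.ker (op2 n α β a) ⊓ Van2 n β r with hWdef
  set T : ℕ → Submodule ℂ (Fin β → Fin n → ℂ) :=
    fun r => LinearMap.ker (op1 n α β a) ⊓ Van1 n β r with hTdef
  set f : ℕ → (Fin β → Fin n → Fin n → ℂ) →ₗ[ℂ] (Fin β → Fin n → ℂ) :=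
    fun r => if h : r < n then sl2 n β ⟨r, h⟩ else 0 with hfdef
  have hWn : W n = ⊥ := by
    show Sym2Sub n β ⊓ LinearMap.ker (op2 n α β a) ⊓ Van2 n β n = ⊥
    rw [Van2_n, inf_bot_eq]
  have hle : ∀ r, W (r + 1) ≤ W r := by
    intro r
    refine inf_le_inf_left _ ?_
    intro P hP i j k h
    exact hP i j k (by omega)
  have hker : ∀ r, r < n → ∀ x ∈ W r, (f r x = 0 ↔ x ∈ W (r + 1)) := by
    intro r hr x hx
    have hfr : f r = sl2 n β ⟨r, hr⟩ := by simp [hfdef, hr]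
    obtain ⟨⟨hs, hk⟩, hv⟩ := hx
    rw [hfr]
    constructor
    · intro h0
      refine ⟨⟨hs, hk⟩, ?_⟩
      intro i j k h
      rcases Nat.lt_or_ge j.1 r with hj | hj
      · exact hv i j k (Or.inl hj)
      rcases Nat.lt_or_ge k.1 r with hk' | hk'
      · exact hv i j k (Or.inr hk')
      rcases h with h | h
      · have hj' : j = ⟨r, hr⟩ := by apply Fin.ext; show j.1 = r; omega
        subst hj'
        exact congrFun (congrFun h0 i) k
      · have hk'' : k = ⟨r, hr⟩ := by apply Fin.ext; show k.1 = r; omega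
        subst hk''
        rw [hs i j ⟨r, hr⟩]
        exact congrFun (congrFun h0 i) j
    · intro hx' 
      funext i k
      exact hx'.2 i ⟨r, hr⟩ k (Or.inl (by show r < r + 1; omega))
  have hmap : ∀ r, r < n → (W r).map (f r) ≤ T r := by
    rintro r hr _ ⟨x, hx, rfl⟩
    obtain ⟨⟨hs, hk⟩, hv⟩ := hx
    have hfr : f r = sl2 n β ⟨r, hr⟩ := by simp [hfdef, hr]
    rw [hfr]
    refine Submodule.mem_inf.mpr ⟨LinearMap.mem_ker.mpr ?_, ?_⟩
    · funext m
      have h2 : op2 n α β a x = 0 := LinearMap.mem_ker.mp hk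
      have := congrFun (congrFun h2 m) ⟨r, hr⟩
      rw [op2_apply] at this
      simpa [op1_apply, sl2_apply] using this
    · intro i j hj
      exact hv i ⟨r, hr⟩ j (Or.inr hj)
  have tele := tele_sum n W f hWn hle hker
  have hW0 : W 0 = Sym2Sub n β ⊓ LinearMap.ker (op2 n α β a) := by
    show Sym2Sub n β ⊓ LinearMap.ker (op2 n α β a) ⊓ Van2 n β 0 = _
    rw [Van2_zero, inf_top_eq]
  have hT0 : T 0 = LinearMap.ker (op1 n α β a) := by
    show LinearMap.ker (op1 n α β a) ⊓ Van1 n β 0 = _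
    rw [Van1_zero, inf_top_eq]
  have hTsum : ∑ r ∈ Finset.range n, Module.finrank ℂ (T r) =
      Module.finrank ℂ ↥(LinearMap.ker (op1 n α β a)) +
        ∑ r ∈ Finset.Icc 1 (n - 1),
          Module.finrank ℂ ↥(LinearMap.ker (op1 n α β a) ⊓ Van1 n β r) := by
    rw [range_split n hn, hT0]
  have hsum : ∑ r ∈ Finset.range n, Module.finrank ℂ ((W r).map (f r)) =
      ∑ r ∈ Finset.range n, Module.finrank ℂ (T r) := by
    rw [← tele, hW0, H2, hTsum]
  have hle' : ∀ r ∈ Finset.range n, Module.finrank ℂ ((W r).map (f r)) ≤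
      Module.finrank ℂ (T r) := fun r hr =>
    Submodule.finrank_mono (hmap r (Finset.mem_range.mp hr))
  have heach : ∀ r ∈ Finset.range n,
      Module.finrank ℂ ((W r).map (f r)) = Module.finrank ℂ (T r) :=
    (Finset.sum_eq_sum_iff_of_le hle').mp hsum
  intro r u hu
  have hmapeq : (W r.1).map (f r.1) = T r.1 :=
    Submodule.eq_of_le_of_finrank_eq (hmap r.1 r.2)
      (heach r.1 (Finset.mem_range.mpr r.2))
  have hu' : u ∈ T r.1 := hu
  rw [← hmapeq] at hu'
  obtain ⟨P, hP, hPu⟩ := hu'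
  refine ⟨P, hP, ?_⟩
  have hfr : f r.1 = sl2 n β r := by simp [hfdef, r.2]
  rw [hfr] at hPu
  intro i j
  exact congrFun (congrFun hPu i) j

/-- Key extension lemma: a preimage under `𝒜¹` can be chosen with prescribed first
`r` slices. -/
lemma key (n α β : ℕ) (a : Fin α → Fin β → Fin n → ℂ)
    (QR : ∀ (r : Fin n) (u : Fin β → Fin n → ℂ),
      u ∈ LinearMap.ker (op1 n α β a) ⊓ Van1 n β r.1 →
      ∃ P ∈ (Sym2Sub n β ⊓ LinearMap.ker (op2 n α β a)) ⊓ Van2 n β r.1,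
        ∀ i j, P i r j = u i j) :
    ∀ r : ℕ, r ≤ n → ∀ q : Fin α → Fin n → ℂ,
      q ∈ Submodule.map (op2 n α β a) (Sym2Sub n β) →
      ∀ t : Fin n → Fin β → Fin n → ℂ,
      (∀ l j : Fin n, l.1 < r → j.1 < r → ∀ i, t l i j = t j i l) →
      (∀ l : Fin n, l.1 < r → ∀ m, (∑ i, ∑ j, a m i j * t l i j) = q m l) →
      ∃ P ∈ Sym2Sub n β, op2 n α β a P = q ∧
        ∀ l : Fin n, l.1 < r → ∀ i j, P i l j = t l i j := by
  intro r
  induction r with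
  | zero =>
    intro _ q hq t _ _
    obtain ⟨P, hP, hPq⟩ := hq
    exact ⟨P, hP, hPq, fun l hl => absurd hl (by omega)⟩
  | succ r ih =>
    intro hrn q hq t hsym hop
    have hr : r < n := by omega
    obtain ⟨P', hP's, hP'q, hP'sl⟩ := ih (by omega) q hq t
      (fun l j hl hj i => hsym l j (by omega) (by omega) i)
      (fun l hl m => hop l (by omega) m)
    set rr : Fin n := ⟨r, hr⟩ with hrr
    have hrlt : rr.1 < r + 1 := by show r < r + 1; omega
    set u : Fin β → Fin n → ℂ := t rr - sl2 n β rr P' with hu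
    have humem : u ∈ LinearMap.ker (op1 n α β a) ⊓ Van1 n β r := by
      refine Submodule.mem_inf.mpr ⟨LinearMap.mem_ker.mpr ?_, ?_⟩
      · rw [hu, map_sub]
        have h1 : op1 n α β a (t rr) = fun m => q m rr := by
          funext m
          rw [op1_apply]
          exact hop rr hrlt m
        have h2 : op1 n α β a (sl2 n β rr P') = fun m => q m rr := by
          funext m
          rw [op1_apply]
          simp only [sl2_apply]
          rw [← op2_apply n α β a P' m rr, hP'q]
        rw [h1, h2, sub_self]
      · intro i j hj
        show t rr i j - sl2 n β rr P' i j = 0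
        rw [sl2_apply]
        have e1 : t rr i j = t j i rr := hsym rr j hrlt (by omega) i
        have e2 : P' i rr j = P' i j rr := hP's i rr j
        rw [e1, e2, hP'sl j hj i rr, sub_self]
    obtain ⟨R, hR, hRu⟩ := QR rr u humem
    obtain ⟨⟨hRs, hRk⟩, hRv⟩ := hR
    refine ⟨P' + R, Submodule.add_mem _ hP's hRs, ?_, ?_⟩
    · rw [map_add, hP'q, LinearMap.mem_ker.mp hRk, add_zero]
    · intro l hl i j
      show P' i l j + R i l j = t l i j
      by_cases hlr : l.1 < r
      · rw [hP'sl l hlr i j, hRv i l j (Or.inl hlr), add_zero]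
      · have hleq : l = rr := by apply Fin.ext; show l.1 = r; omega
        subst hleq
        rw [hRu i j]
        show P' i rr j + (t rr i j - sl2 n β rr P' i j) = t rr i j
        rw [sl2_apply]
        ring

/-- Inductive construction of the slices of a symmetric 3-jet preimage. -/
lemma fam (n α β γ : ℕ) (a : Fin α → Fin β → Fin n → ℂ) (b : Fin γ → Fin α → Fin n → ℂ)
    (H1 : LinearMap.ker (op1 n γ α b) = Submodule.map (op2 n α β a) (Sym2Sub n β))
    (QR : ∀ (r : Fin n) (u : Fin β → Fin n → ℂ),
      u ∈ LinearMap.ker (op1 n α β a) ⊓ Van1 n β r.1 →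
      ∃ P ∈ (Sym2Sub n β ⊓ LinearMap.ker (op2 n α β a)) ⊓ Van2 n β r.1,
        ∀ i j, P i r j = u i j)
    (Q : Fin α → Fin n → Fin n → ℂ) (hQs : Q ∈ Sym2Sub n α)
    (hQk : Q ∈ LinearMap.ker (op2 n γ α b)) :
    ∀ k : ℕ, k ≤ n → ∃ F : Fin n → (Fin β → Fin n → Fin n → ℂ),
      (∀ l : Fin n, l.1 < k → F l ∈ Sym2Sub n β) ∧
      (∀ l : Fin n, l.1 < k → op2 n α β a (F l) = fun m x => Q m l x) ∧
      (∀ l l' : Fin n, l.1 < k → l'.1 < k → ∀ i x, F l i l' x = F l' i l x) := by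
  intro k
  induction k with
  | zero =>
    exact fun _ => ⟨fun _ => 0, fun l hl => absurd hl (by omega),
      fun l hl => absurd hl (by omega), fun l l' hl => absurd hl (by omega)⟩
  | succ k ih =>
    intro hkn
    have hk : k < n := by omega
    obtain ⟨F, hFs, hFq, hFc⟩ := ih (by omega)
    set kk : Fin n := ⟨k, hk⟩ with hkk
    have hqmem : (fun m x => Q m kk x) ∈ Submodule.map (op2 n α β a) (Sym2Sub n β) := by
      rw [← H1, LinearMap.mem_ker]
      funext m
      show (∑ i, ∑ j, b m i j * Q i kk j) = 0
      have := congrFun (congrFun (LinearMap.mem_ker.mp hQk) m) kk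
      rw [op2_apply] at this
      exact this
    obtain ⟨P, hPs, hPq, hPsl⟩ := key n α β a QR k (by omega) (fun m x => Q m kk x) hqmem
      (fun l => fun i j => F l i kk j)
      (by
        intro l j hl hj i
        calc F l i kk j = F l i j kk := hFs l hl i kk j
        _ = F j i l kk := hFc l j hl hj i kk
        _ = F j i kk l := hFs j hj i l kk)
      (by
        intro l hl m
        have h1 : op2 n α β a (F l) m kk = Q m l kk := congrFun (congrFun (hFq l hl) m) kk
        rw [op2_apply] at h1
        show (∑ i, ∑ j, a m i j * F l i kk j) = Q m kk l
        rw [h1]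
        exact hQs m l kk)
    refine ⟨fun l => if l.1 < k then F l else P, ?_, ?_, ?_⟩
    · intro l hl
      by_cases h : l.1 < k
      · simpa [h] using hFs l h
      · simpa [h] using hPs
    · intro l hl
      by_cases h : l.1 < k
      · simpa [h] using hFq l h
      · have hleq : l = kk := by apply Fin.ext; show l.1 = k; omega
        subst hleq
        simpa [h] using hPq
    · intro l l' hl hl' i x
      by_cases h : l.1 < k <;> by_cases h' : l'.1 < k
      · simpa [h, h'] using hFc l l' h h' i x
      · have hleq : l' = kk := by apply Fin.ext; show l'.1 = k; omega
        subst hleq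
        simp only [h, h', if_true, if_false]
        exact (hPsl l h i x).symm
      · have hleq : l = kk := by apply Fin.ext; show l.1 = k; omega
        subst hleq
        simp only [h, h', if_true, if_false]
        exact hPsl l' h' i x
      · have hleq : l = kk := by apply Fin.ext; show l.1 = k; omega
        have hleq' : l' = kk := by apply Fin.ext; show l'.1 = k; omega
        subst hleq; subst hleq'
        simp [h]

/-- Exactness of the prolonged sequence: `B¹ = 𝒜²(S^β_3)`. -/
lemma exactness (n α β γ : ℕ) (a : Fin α → Fin β → Fin n → ℂ)
    (b : Fin γ → Fin α → Fin n → ℂ)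
    (H1 : LinearMap.ker (op1 n γ α b) = Submodule.map (op2 n α β a) (Sym2Sub n β))
    (QR : ∀ (r : Fin n) (u : Fin β → Fin n → ℂ),
      u ∈ LinearMap.ker (op1 n α β a) ⊓ Van1 n β r.1 →
      ∃ P ∈ (Sym2Sub n β ⊓ LinearMap.ker (op2 n α β a)) ⊓ Van2 n β r.1,
        ∀ i j, P i r j = u i j) :
    Submodule.map (op3 n α β a) (Sym3Sub n β) =
      Sym2Sub n α ⊓ LinearMap.ker (op2 n γ α b) := by
  apply le_antisymm
  · rintro _ ⟨P, hP, rfl⟩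
    obtain ⟨h1, h2, h3⟩ := hP
    refine Submodule.mem_inf.mpr ⟨?_, ?_⟩
    · intro m l l'
      show (∑ i, ∑ j, a m i j * P i l l' j) = ∑ i, ∑ j, a m i j * P i l' l j
      exact Finset.sum_congr rfl fun i _ => Finset.sum_congr rfl fun j _ => by
        rw [h1 i l l' j]
    · rw [LinearMap.mem_ker]
      funext m l
      show op1 n γ α b (op2 n α β a (sl3 n β l P)) m = 0
      have hmem : op2 n α β a (sl3 n β l P) ∈ LinearMap.ker (op1 n γ α b) := by
        rw [H1]
        exact ⟨sl3 n β l P, fun i x y => h2 i l x y, rfl⟩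
      exact congrFun (LinearMap.mem_ker.mp hmem) m
  · rintro Q hQ
    have hQs : Q ∈ Sym2Sub n α := hQ.1
    have hQk : Q ∈ LinearMap.ker (op2 n γ α b) := hQ.2
    obtain ⟨F, hFs, hFq, hFc⟩ := fam n α β γ a b H1 QR Q hQs hQk n le_rfl
    refine ⟨fun i j k l => F j i k l, ⟨?_, ?_, ?_⟩, ?_⟩
    · intro i j k l
      exact hFc j k j.2 k.2 i l
    · intro i j k l
      exact hFs j j.2 i k l
    · intro i j k l
      calc F j i k l = F j i l k := hFs j j.2 i k l
      _ = F l i j k := hFc j l j.2 l.2 i k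
      _ = F l i k j := hFs l l.2 i j k
    · funext m l l'
      show (∑ i, ∑ j, a m i j * F l i l' j) = Q m l l'
      have h := congrFun (congrFun (hFq l l.2) m) l'
      rw [op2_apply] at h
      exact h

/-- Surjectivity of the slice map for the full symmetric spaces. -/
lemma sym_surj (n β : ℕ) (r : Fin n) (u : Fin β → Fin n → Fin n → ℂ)
    (hus : u ∈ Sym2Sub n β) (huv : u ∈ Van2 n β r.1) :
    ∃ R ∈ Sym3Sub n β ⊓ Van3 n β r.1, ∀ i k l, R i r k l = u i k l := by
  have hs : ∀ i x y, u i x y = u i y x := hus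
  have hv : ∀ i x y, x.1 < r.1 ∨ y.1 < r.1 → u i x y = 0 := huv
  refine ⟨fun i j k l => if j = r then u i k l else if k = r then u i j l else
    if l = r then u i j k else 0, Submodule.mem_inf.mpr ⟨⟨?_, ?_, ?_⟩, ?_⟩, ?_⟩
  · intro i j k l
    by_cases hj : j = r <;> by_cases hk : k = r <;>
      simp only [hj, hk, if_true, if_false] <;> subst_vars <;> simp_all
  · intro i j k l
    by_cases hj : j = r <;> by_cases hk : k = r <;> by_cases hl : l = r <;>
      simp only [hj, hk, hl, if_true, if_false] <;> subst_vars <;> simp_all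
  · intro i j k l
    by_cases hj : j = r <;> by_cases hk : k = r <;> by_cases hl : l = r <;>
      simp only [hj, hk, hl, if_true, if_false] <;> subst_vars <;> simp_all
  · intro i j k l h
    by_cases hj : j = r <;> by_cases hk : k = r <;> by_cases hl : l = r <;>
      simp only [hj, hk, hl, if_true, if_false]
    all_goals subst_vars
    all_goals first
      | rfl
      | (apply hv; omega)
  · intro i k l
    simp

/-- The dimension identity for the full symmetric spaces:
`dim S^β_3 = dim S^β_2 + Σ_r dim S^β_{2,r}`. -/
lemma sym_identity (n β : ℕ) (hn : 0 < n) :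
    Module.finrank ℂ (Sym3Sub n β) = Module.finrank ℂ (Sym2Sub n β) +
      ∑ r ∈ Finset.Icc 1 (n - 1),
        Module.finrank ℂ ↥(Sym2Sub n β ⊓ Van2 n β r) := by
  set W : ℕ → Submodule ℂ (Fin β → Fin n → Fin n → Fin n → ℂ) :=
    fun r => Sym3Sub n β ⊓ Van3 n β r with hWdef
  set f : ℕ → (Fin β → Fin n → Fin n → Fin n → ℂ) →ₗ[ℂ] (Fin β → Fin n → Fin n → ℂ) :=
    fun r => if h : r < n then sl3 n β ⟨r, h⟩ else 0 with hfdef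
  have hWn : W n = ⊥ := by
    show Sym3Sub n β ⊓ Van3 n β n = ⊥
    rw [Van3_n, inf_bot_eq]
  have hle : ∀ r, W (r + 1) ≤ W r := by
    intro r
    refine inf_le_inf_left _ ?_
    intro P hP i j k l h
    refine hP i j k l ?_
    rcases h with h | h | h
    exacts [Or.inl (by omega), Or.inr (Or.inl (by omega)), Or.inr (Or.inr (by omega))]
  have hker : ∀ r, r < n → ∀ x ∈ W r, (f r x = 0 ↔ x ∈ W (r + 1)) := by
    intro r hr x hx
    have hfr : f r = sl3 n β ⟨r, hr⟩ := by simp [hfdef, hr]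
    obtain ⟨hsym, hv⟩ := hx
    obtain ⟨h1, h2, h3⟩ := hsym
    rw [hfr]
    constructor
    · intro h0
      refine ⟨⟨h1, h2, h3⟩, ?_⟩
      intro i j k l h
      have hz : ∀ k' l', x i ⟨r, hr⟩ k' l' = 0 := fun k' l' =>
        congrFun (congrFun (congrFun h0 i) k') l'
      rcases h with h | h | h
      · rcases Nat.lt_or_ge j.1 r with h' | h'
        · exact hv i j k l (Or.inl h')
        · have : j = ⟨r, hr⟩ := by apply Fin.ext; show j.1 = r; omega
          rw [this]; exact hz k l
      · rcases Nat.lt_or_ge k.1 r with h' | h'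
        · exact hv i j k l (Or.inr (Or.inl h'))
        · have : k = ⟨r, hr⟩ := by apply Fin.ext; show k.1 = r; omega
          rw [h1 i j k l, this]; exact hz j l
      · rcases Nat.lt_or_ge l.1 r with h' | h'
        · exact hv i j k l (Or.inr (Or.inr h'))
        · have : l = ⟨r, hr⟩ := by apply Fin.ext; show l.1 = r; omega
          rw [h3 i j k l, this]; exact hz k j
    · intro hx'
      funext i k l
      exact hx'.2 i ⟨r, hr⟩ k l (Or.inl (by show r < r + 1; omega))
  have hmapeq : ∀ r, r < n → (W r).map (f r) = Sym2Sub n β ⊓ Van2 n β r := by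
    intro r hr
    have hfr : f r = sl3 n β ⟨r, hr⟩ := by simp [hfdef, hr]
    apply le_antisymm
    · rintro _ ⟨x, hx, rfl⟩
      obtain ⟨⟨h1, h2, h3⟩, hv⟩ := hx
      rw [hfr]
      refine Submodule.mem_inf.mpr ⟨?_, ?_⟩
      · intro i s t
        exact h2 i ⟨r, hr⟩ s t
      · intro i s t h
        rcases h with h | h
        · exact hv i ⟨r, hr⟩ s t (Or.inr (Or.inl h))
        · exact hv i ⟨r, hr⟩ s t (Or.inr (Or.inr h))
    · intro u hu
      obtain ⟨R, hR, hRu⟩ := sym_surj n β ⟨r, hr⟩ u hu.1 hu.2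
      refine ⟨R, hR, ?_⟩
      rw [hfr]
      funext i k l
      exact hRu i k l
  have tele := tele_sum n W f hWn hle hker
  have hW0 : W 0 = Sym3Sub n β := by
    show Sym3Sub n β ⊓ Van3 n β 0 = _
    rw [Van3_zero, inf_top_eq]
  have hsum : ∑ r ∈ Finset.range n, Module.finrank ℂ ((W r).map (f r)) =
      ∑ r ∈ Finset.range n, Module.finrank ℂ ↥(Sym2Sub n β ⊓ Van2 n β r) := by
    refine Finset.sum_congr rfl fun r hr => ?_
    rw [hmapeq r (Finset.mem_range.mp hr)]
  have hsplit := range_split n hn (fun r => Module.finrank ℂ ↥(Sym2Sub n β ⊓ Van2 n β r))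
  have h0 : Sym2Sub n β ⊓ Van2 n β 0 = Sym2Sub n β := by
    rw [Van2_zero, inf_top_eq]
  rw [← hW0, tele, hsum, hsplit, h0]

end TorsionAux

/-- Lemma 4.6: assume the exactness `ker ℬ = range 𝒜¹` of
`S^β_2 → S^α_1 → S^γ_0` and the involutivity of the tableau of `A` together with the
corresponding identity for its first prolongation. Then the tableau associated to `B` is
in involution (`dim B¹ = dim B⁰ + Σ_{r=1}^{n−1} dim B⁰_r`) if and only if
`dim B⁰_r = dim S^β_{2,r} − dim A¹_r` for every `r ∈ {1,…,n−1}`. -/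
theorem torsion_involutive_iff (n α β γ : ℕ) (hn : 0 < n) (hα : 0 < α) (hβ : 0 < β)
    (hγ : 0 < γ) (a : Fin α → Fin β → Fin n → ℂ) (b : Fin γ → Fin α → Fin n → ℂ)
    (H1 : LinearMap.ker (op1 n γ α b) = Submodule.map (op2 n α β a) (Sym2Sub n β))
    (H2 : Module.finrank ℂ ↥(Sym2Sub n β ⊓ LinearMap.ker (op2 n α β a)) =
      Module.finrank ℂ ↥(LinearMap.ker (op1 n α β a)) +
        ∑ r ∈ Finset.Icc 1 (n - 1),
          Module.finrank ℂ ↥(LinearMap.ker (op1 n α β a) ⊓ Van1 n β r))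
    (H2' : Module.finrank ℂ ↥(Sym3Sub n β ⊓ LinearMap.ker (op3 n α β a)) =
      Module.finrank ℂ ↥(Sym2Sub n β ⊓ LinearMap.ker (op2 n α β a)) +
        ∑ r ∈ Finset.Icc 1 (n - 1),
          Module.finrank ℂ
            ↥(Sym2Sub n β ⊓ LinearMap.ker (op2 n α β a) ⊓ Van2 n β r)) :
    (Module.finrank ℂ ↥(Sym2Sub n α ⊓ LinearMap.ker (op2 n γ α b)) =
      Module.finrank ℂ ↥(LinearMap.ker (op1 n γ α b)) +
        ∑ r ∈ Finset.Icc 1 (n - 1),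
          Module.finrank ℂ ↥(LinearMap.ker (op1 n γ α b) ⊓ Van1 n α r)) ↔
    (∀ r ∈ Finset.Icc 1 (n - 1),
      Module.finrank ℂ ↥(LinearMap.ker (op1 n γ α b) ⊓ Van1 n α r) =
        Module.finrank ℂ ↥(Sym2Sub n β ⊓ Van2 n β r) -
          Module.finrank ℂ
            ↥(Sym2Sub n β ⊓ LinearMap.ker (op2 n α β a) ⊓ Van2 n β r)) := by
  classical
  have QR := TorsionAux.quasireg n α β hn a H2
  have EX := TorsionAux.exactness n α β γ a b H1 QR
  -- dim S^β_2 = dim B⁰ + dim A¹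
  have F3 : Module.finrank ℂ (Sym2Sub n β) =
      Module.finrank ℂ ↥(LinearMap.ker (op1 n γ α b)) +
        Module.finrank ℂ ↥(Sym2Sub n β ⊓ LinearMap.ker (op2 n α β a)) := by
    have h := TorsionAux.rn (op2 n α β a) (Sym2Sub n β)
    rw [← H1] at h
    exact h
  -- dim S^β_3 = dim B¹ + dim A²
  have F5 : Module.finrank ℂ (Sym3Sub n β) =
      Module.finrank ℂ ↥(Sym2Sub n α ⊓ LinearMap.ker (op2 n γ α b)) +
        Module.finrank ℂ ↥(Sym3Sub n β ⊓ LinearMap.ker (op3 n α β a)) := by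
    have h := TorsionAux.rn (op3 n α β a) (Sym3Sub n β)
    rw [EX] at h
    exact h
  -- dim S^β_3 = dim S^β_2 + Σ dim S^β_{2,r}
  have F4 := TorsionAux.sym_identity n β hn
  -- dim S^β_{2,r} ≤ dim B⁰_r + dim A¹_r
  have F2 : ∀ r ∈ Finset.Icc 1 (n - 1),
      Module.finrank ℂ ↥(Sym2Sub n β ⊓ Van2 n β r) ≤
        Module.finrank ℂ ↥(LinearMap.ker (op1 n γ α b) ⊓ Van1 n α r) +
          Module.finrank ℂ ↥(Sym2Sub n β ⊓ LinearMap.ker (op2 n α β a) ⊓ Van2 n β r) := by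
    intro r hr
    have h := TorsionAux.rn (op2 n α β a) (Sym2Sub n β ⊓ Van2 n β r)
    have hm : Submodule.map (op2 n α β a) (Sym2Sub n β ⊓ Van2 n β r) ≤
        LinearMap.ker (op1 n γ α b) ⊓ Van1 n α r := by
      rintro _ ⟨x, hx, rfl⟩
      refine Submodule.mem_inf.mpr ⟨?_, ?_⟩
      · rw [H1]
        exact ⟨x, hx.1, rfl⟩
      · intro m l hl
        rw [TorsionAux.op2_apply]
        refine Finset.sum_eq_zero fun i _ => Finset.sum_eq_zero fun j _ => ?_
        rw [hx.2 i l j (Or.inl hl), mul_zero]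
    have hE : Sym2Sub n β ⊓ Van2 n β r ⊓ LinearMap.ker (op2 n α β a) =
        Sym2Sub n β ⊓ LinearMap.ker (op2 n α β a) ⊓ Van2 n β r := inf_right_comm _ _ _
    rw [hE] at h
    have := Submodule.finrank_mono hm
    omega
  -- dim A¹_r ≤ dim S^β_{2,r}
  have Fle : ∀ r ∈ Finset.Icc 1 (n - 1),
      Module.finrank ℂ ↥(Sym2Sub n β ⊓ LinearMap.ker (op2 n α β a) ⊓ Van2 n β r) ≤
        Module.finrank ℂ ↥(Sym2Sub n β ⊓ Van2 n β r) := by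
    intro r hr
    exact Submodule.finrank_mono (inf_le_inf_right _ inf_le_left)
  -- the master identity: b1 + Σ ar = b0 + Σ sr
  have key1 : Module.finrank ℂ ↥(Sym2Sub n α ⊓ LinearMap.ker (op2 n γ α b)) +
      (∑ r ∈ Finset.Icc 1 (n - 1),
        Module.finrank ℂ ↥(Sym2Sub n β ⊓ LinearMap.ker (op2 n α β a) ⊓ Van2 n β r)) =
      Module.finrank ℂ ↥(LinearMap.ker (op1 n γ α b)) +
        ∑ r ∈ Finset.Icc 1 (n - 1),
          Module.finrank ℂ ↥(Sym2Sub n β ⊓ Van2 n β r) := by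
    omega
  constructor
  · intro h r hr
    have hsums : ∑ r ∈ Finset.Icc 1 (n - 1),
        Module.finrank ℂ ↥(Sym2Sub n β ⊓ Van2 n β r) =
        ∑ r ∈ Finset.Icc 1 (n - 1),
          (Module.finrank ℂ ↥(LinearMap.ker (op1 n γ α b) ⊓ Van1 n α r) +
            Module.finrank ℂ
              ↥(Sym2Sub n β ⊓ LinearMap.ker (op2 n α β a) ⊓ Van2 n β r)) := by
      rw [Finset.sum_add_distrib]
      omega
    have hterm := (Finset.sum_eq_sum_iff_of_le F2).mp hsums r hr
    have := Fle r hr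
    omega
  · intro h
    have hterm : ∀ r ∈ Finset.Icc 1 (n - 1),
        Module.finrank ℂ ↥(Sym2Sub n β ⊓ Van2 n β r) =
          Module.finrank ℂ ↥(LinearMap.ker (op1 n γ α b) ⊓ Van1 n α r) +
            Module.finrank ℂ
              ↥(Sym2Sub n β ⊓ LinearMap.ker (op2 n α β a) ⊓ Van2 n β r) := by
      intro r hr
      have h1 := h r hr
      have h2 := Fle r hr
      omega
    have hsums : ∑ r ∈ Finset.Icc 1 (n - 1),
        Module.finrank ℂ ↥(Sym2Sub n β ⊓ Van2 n β r) =
        (∑ r ∈ Finset.Icc 1 (n - 1),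
          Module.finrank ℂ ↥(LinearMap.ker (op1 n γ α b) ⊓ Van1 n α r)) +
          ∑ r ∈ Finset.Icc 1 (n - 1),
            Module.finrank ℂ
              ↥(Sym2Sub n β ⊓ LinearMap.ker (op2 n α β a) ⊓ Van2 n β r) := by
      rw [← Finset.sum_add_distrib]
      exact Finset.sum_congr rfl hterm
    omega

end
end

section
/- Fix positive integers n, α, β, γ and constant coefficients a(m,i,j) ∈ ℂ (m ≤ α, i ≤ β, j ≤ n) and b(m,i,j) ∈ ℂ (m ≤ γ, i ≤ α, j ≤ n). Assume ker ℬ = range 𝒜¹ and dim A¹ = dim A⁰ + Σ_{r=1}^{n−1} dim A⁰_r. Then ker ℬ¹ = range 𝒜², where ℬ¹ : S^α_2 → S^γ_1 is defined by (ℬ¹Q)^m_l = Σ_{i,j} b(m,i,j)·Q^i_{lj} and 𝒜² : S^β_3 → S^α_2 by (𝒜²P)^m_{ll'} = Σ_{i,j} a(m,i,j)·P^i_{ll'j}; in particular dim B¹ = dim S^β_3 − dim A². -/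
noncomputable section

/-! ### Auxiliary infrastructure -/

/-- Rank–nullity for a linear map restricted to a submodule. -/
theorem finrank_map_add_finrank_inf_ker' {K M N : Type*} [Field K] [AddCommGroup M]
    [Module K M] [AddCommGroup N] [Module K N] [FiniteDimensional K M]
    (f : M →ₗ[K] N) (p : Submodule K M) :
    Module.finrank K ↥(Submodule.map f p) +
      Module.finrank K ↥(p ⊓ LinearMap.ker f) = Module.finrank K ↥p := by
  have h := (f.comp p.subtype).finrank_range_add_finrank_ker
  have hr : LinearMap.range (f.comp p.subtype) = Submodule.map f p := by
    rw [LinearMap.range_comp, Submodule.range_subtype]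
  have hk : LinearMap.ker (f.comp p.subtype) =
      Submodule.comap p.subtype (p ⊓ LinearMap.ker f) := by
    rw [LinearMap.ker_comp, Submodule.comap_inf, Submodule.comap_subtype_self, top_inf_eq]
  have e := Submodule.comapSubtypeEquivOfLe (inf_le_left : p ⊓ LinearMap.ker f ≤ p)
  rw [hr, hk] at h
  rw [← h, e.finrank_eq]

/-- The slice linear map on 2-jets: evaluation of the middle index. -/
def sliceL (n β : ℕ) (r : Fin n) :
    (Fin β → Fin n → Fin n → ℂ) →ₗ[ℂ] (Fin β → Fin n → ℂ) where
  toFun P := fun i k => P i r k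
  map_add' _ _ := rfl
  map_smul' _ _ := rfl

/-- Jets whose middle index is less than `r` vanish. -/
def VanMid (n β : ℕ) (r : ℕ) : Submodule ℂ (Fin β → Fin n → Fin n → ℂ) where
  carrier := {P | ∀ i j k, j.1 < r → P i j k = 0}
  add_mem' := by
    intro P Q hP hQ i j k hj
    simp only [Pi.add_apply, hP i j k hj, hQ i j k hj, add_zero]
  zero_mem' := by intro i j k hj; rfl
  smul_mem' := by
    intro c P hP i j k hj
    simp only [Pi.smul_apply, hP i j k hj, smul_zero]

/-- The filtration of the first prolongation `A¹`. -/
def Fil (n α β : ℕ) (a : Fin α → Fin β → Fin n → ℂ) (r : ℕ) :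
    Submodule ℂ (Fin β → Fin n → Fin n → ℂ) :=
  Sym2Sub n β ⊓ LinearMap.ker (op2 n α β a) ⊓ VanMid n β r

theorem op1_apply (n α β : ℕ) (a : Fin α → Fin β → Fin n → ℂ) (P : Fin β → Fin n → ℂ)
    (m : Fin α) : op1 n α β a P m = ∑ i, ∑ j, a m i j * P i j := rfl

theorem op2_apply (n α β : ℕ) (a : Fin α → Fin β → Fin n → ℂ)
    (P : Fin β → Fin n → Fin n → ℂ) (m : Fin α) (l : Fin n) :
    op2 n α β a P m l = ∑ i, ∑ j, a m i j * P i l j := rfl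

theorem op3_apply (n α β : ℕ) (a : Fin α → Fin β → Fin n → ℂ)
    (P : Fin β → Fin n → Fin n → Fin n → ℂ) (m : Fin α) (l l' : Fin n) :
    op3 n α β a P m l l' = ∑ i, ∑ j, a m i j * P i l l' j := rfl

/-- A slice of an element of the kernel of `op2` is in the kernel of `op1`. -/
theorem slice_mem_ker (n α β : ℕ) (a : Fin α → Fin β → Fin n → ℂ)
    (P : Fin β → Fin n → Fin n → ℂ) (hP : op2 n α β a P = 0) (r : Fin n) :
    op1 n α β a (sliceL n β r P) = 0 := by
  funext m
  have := congrFun (congrFun hP m) r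
  simpa [op1_apply, op2_apply, sliceL] using this

theorem Fil_zero (n α β : ℕ) (a : Fin α → Fin β → Fin n → ℂ) :
    Fil n α β a 0 = Sym2Sub n β ⊓ LinearMap.ker (op2 n α β a) := by
  rw [Fil, inf_eq_left]
  intro P _ i j k hj
  exact absurd hj (Nat.not_lt_zero _)

theorem Fil_n (n α β : ℕ) (a : Fin α → Fin β → Fin n → ℂ) :
    Fil n α β a n = ⊥ := by
  rw [eq_bot_iff]
  rintro P ⟨-, hP⟩
  have : P = 0 := by
    funext i j k
    exact hP i j k j.2
  simp [this]

theorem Fil_inf_ker_slice (n α β : ℕ) (a : Fin α → Fin β → Fin n → ℂ) (r : ℕ)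
    (hr : r < n) :
    Fil n α β a r ⊓ LinearMap.ker (sliceL n β ⟨r, hr⟩) = Fil n α β a (r + 1) := by
  ext P
  constructor
  · rintro ⟨⟨h1, h2⟩, h3⟩
    refine ⟨h1, ?_⟩
    intro i j k hj
    rcases Nat.lt_or_ge j.1 r with h | h
    · exact h2 i j k h
    · have hjr : j = ⟨r, hr⟩ := Fin.ext (le_antisymm (Nat.lt_succ_iff.mp hj) h)
      subst hjr
      exact congrFun (congrFun (LinearMap.mem_ker.mp h3) i) k
  · rintro ⟨h1, h2⟩
    refine ⟨⟨h1, fun i j k hj => h2 i j k (Nat.lt_succ_of_lt hj)⟩, ?_⟩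
    have hz : sliceL n β ⟨r, hr⟩ P = 0 := by
      funext i k
      exact h2 i ⟨r, hr⟩ k (Nat.lt_succ_self r)
    exact LinearMap.mem_ker.mpr hz

theorem map_slice_le (n α β : ℕ) (a : Fin α → Fin β → Fin n → ℂ) (r : ℕ) (hr : r < n) :
    Submodule.map (sliceL n β ⟨r, hr⟩) (Fil n α β a r) ≤
      LinearMap.ker (op1 n α β a) ⊓ Van1 n β r := by
  rintro Q ⟨P, ⟨⟨hsym, hker⟩, hvan⟩, rfl⟩
  constructor
  · exact LinearMap.mem_ker.mpr (slice_mem_ker n α β a P (LinearMap.mem_ker.mp hker) _)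
  · intro i k hk
    show P i ⟨r, hr⟩ k = 0
    rw [hsym i ⟨r, hr⟩ k]
    exact hvan i k _ hk


theorem finrank_Fil_telescope (n α β : ℕ) (a : Fin α → Fin β → Fin n → ℂ) :
    ∀ d r : ℕ, r + d = n →
      Module.finrank ℂ ↥(Fil n α β a r) =
        ∑ s : Fin n, if r ≤ s.1 then
          Module.finrank ℂ ↥(Submodule.map (sliceL n β s) (Fil n α β a s.1)) else 0 := by
  intro d
  induction d with
  | zero =>
    intro r hrn
    obtain rfl : r = n := by omega
    rw [Fil_n]
    rw [Finset.sum_eq_zero (fun s _ => by rw [if_neg (Nat.not_le_of_lt s.2)])]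
    simp
  | succ d ih =>
    intro r hrn
    have hr : r < n := by omega
    have key := finrank_map_add_finrank_inf_ker' (sliceL n β ⟨r, hr⟩) (Fil n α β a r)
    rw [Fil_inf_ker_slice n α β a r hr] at key
    have ih' := ih (r + 1) (by omega)
    have split : (∑ s : Fin n, if r ≤ s.1 then
          Module.finrank ℂ ↥(Submodule.map (sliceL n β s) (Fil n α β a s.1)) else 0) =
        Module.finrank ℂ ↥(Submodule.map (sliceL n β ⟨r, hr⟩) (Fil n α β a r)) +
        ∑ s : Fin n, if r + 1 ≤ s.1 then
          Module.finrank ℂ ↥(Submodule.map (sliceL n β s) (Fil n α β a s.1)) else 0 := by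
      have : ∀ s : Fin n, (if r ≤ s.1 then
            Module.finrank ℂ ↥(Submodule.map (sliceL n β s) (Fil n α β a s.1)) else 0) =
          (if s = ⟨r, hr⟩ then
            Module.finrank ℂ ↥(Submodule.map (sliceL n β ⟨r, hr⟩) (Fil n α β a r)) else 0) +
          (if r + 1 ≤ s.1 then
            Module.finrank ℂ ↥(Submodule.map (sliceL n β s) (Fil n α β a s.1)) else 0) := by
        intro s
        by_cases h1 : s = ⟨r, hr⟩
        · subst h1
          simp
        · rw [if_neg h1, zero_add]
          have h1' : s.1 ≠ r := fun hc => h1 (Fin.ext hc)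
          rcases Nat.lt_or_ge s.1 r with h | h
          · rw [if_neg (by omega), if_neg (by omega)]
          · rw [if_pos (by omega), if_pos (by omega)]
      rw [Finset.sum_congr rfl (fun s _ => this s), Finset.sum_add_distrib,
        Finset.sum_ite_eq' Finset.univ (⟨r, hr⟩ : Fin n)]
      simp
    rw [split, ← ih', ← key]

/-- From the involutivity hypothesis: each slice map is surjective onto `A⁰_r`. -/
theorem slice_surjective (n α β : ℕ) (hn : 0 < n) (a : Fin α → Fin β → Fin n → ℂ)
    (H2 : Module.finrank ℂ ↥(Sym2Sub n β ⊓ LinearMap.ker (op2 n α β a)) =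
      Module.finrank ℂ ↥(LinearMap.ker (op1 n α β a)) +
        ∑ r ∈ Finset.Icc 1 (n - 1),
          Module.finrank ℂ ↥(LinearMap.ker (op1 n α β a) ⊓ Van1 n β r)) :
    ∀ r : ℕ, ∀ hr : r < n,
      Submodule.map (sliceL n β ⟨r, hr⟩) (Fil n α β a r) =
        LinearMap.ker (op1 n α β a) ⊓ Van1 n β r := by
  -- abbreviations
  set g : Fin n → ℕ := fun s =>
    Module.finrank ℂ ↥(Submodule.map (sliceL n β s) (Fil n α β a s.1)) with hg
  set t : Fin n → ℕ := fun s =>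
    Module.finrank ℂ ↥(LinearMap.ker (op1 n α β a) ⊓ Van1 n β s.1) with ht
  have hsum_g : Module.finrank ℂ ↥(Sym2Sub n β ⊓ LinearMap.ker (op2 n α β a)) =
      ∑ s : Fin n, g s := by
    have := finrank_Fil_telescope n α β a n 0 (by omega)
    rw [Fil_zero] at this
    rw [this]
    exact Finset.sum_congr rfl fun s _ => by rw [if_pos (Nat.zero_le _)]
  have hsum_t : Module.finrank ℂ ↥(LinearMap.ker (op1 n α β a)) +
      ∑ r ∈ Finset.Icc 1 (n - 1),
        Module.finrank ℂ ↥(LinearMap.ker (op1 n α β a) ⊓ Van1 n β r) =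
      ∑ s : Fin n, t s := by
    have h0 : LinearMap.ker (op1 n α β a) ⊓ Van1 n β 0 = LinearMap.ker (op1 n α β a) := by
      rw [inf_eq_left]
      intro P _ i j hj
      exact absurd hj (Nat.not_lt_zero _)
    have : ∑ s : Fin n, t s = ∑ r ∈ Finset.range n,
        Module.finrank ℂ ↥(LinearMap.ker (op1 n α β a) ⊓ Van1 n β r) := by
      rw [Finset.sum_range fun r =>
        Module.finrank ℂ ↥(LinearMap.ker (op1 n α β a) ⊓ Van1 n β r)]
    rw [this]
    have hins : Finset.range n = insert 0 (Finset.Icc 1 (n - 1)) := by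
      ext x
      simp only [Finset.mem_range, Finset.mem_insert, Finset.mem_Icc]
      omega
    rw [hins, Finset.sum_insert (by simp), h0]
  have hle : ∀ s : Fin n, g s ≤ t s := fun s =>
    Submodule.finrank_mono (map_slice_le n α β a s.1 s.2)
  have hEq : ∀ s : Fin n, g s = t s := by
    by_contra hc
    push_neg at hc
    obtain ⟨s0, hs0⟩ := hc
    have hlt : g s0 < t s0 := lt_of_le_of_ne (hle s0) hs0
    have : ∑ s : Fin n, g s < ∑ s : Fin n, t s :=
      Finset.sum_lt_sum (fun s _ => hle s) ⟨s0, Finset.mem_univ s0, hlt⟩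
    rw [← hsum_g, ← hsum_t, ← H2] at this
    exact lt_irrefl _ this
  intro r hr
  have := hEq ⟨r, hr⟩
  exact Submodule.eq_of_le_of_finrank_eq (map_slice_le n α β a r hr) this


/-- The key δ-Poincaré-type correction lemma: given surjectivity of the slice maps
(involutivity), every `A⁰`-valued 2-cocycle that vanishes for first index `< n - d`
is the coboundary of a map into `A¹`. -/
theorem cocycle_lemma (n α β : ℕ) (a : Fin α → Fin β → Fin n → ℂ)
    (Hsurj : ∀ r : ℕ, ∀ hr : r < n,
      Submodule.map (sliceL n β ⟨r, hr⟩) (Fil n α β a r) =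
        LinearMap.ker (op1 n α β a) ⊓ Van1 n β r) :
    ∀ d : ℕ, ∀ T : Fin n → Fin n → (Fin β → Fin n → ℂ),
      (∀ l j, T l j ∈ LinearMap.ker (op1 n α β a)) →
      (∀ l j, T l j = - T j l) →
      (∀ l j k i, T l j i k + T j k i l + T k l i j = 0) →
      (∀ l j, l.1 < n - d → T l j = 0) →
      ∃ C : Fin n → (Fin β → Fin n → Fin n → ℂ),
        (∀ l, C l ∈ Sym2Sub n β ⊓ LinearMap.ker (op2 n α β a)) ∧
        (∀ l j i k, C l i j k - C j i l k = T l j i k) := by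
  intro d
  induction d with
  | zero =>
    intro T _ _ _ hvan
    refine ⟨fun _ => 0, fun l => Submodule.zero_mem _, fun l j i k => ?_⟩
    rw [hvan l j (by omega)]
    simp
  | succ d ih =>
    intro T hker hanti hcoc hvan
    by_cases hdn : d + 1 ≤ n
    case neg =>
      exact ih T hker hanti hcoc (fun l j hl => hvan l j (by omega))
    case pos =>
    set r : ℕ := n - (d + 1) with hrdef
    have hr : r < n := by omega
    set R : Fin n := ⟨r, hr⟩ with hRdef
    have hRval : R.1 = r := rfl
    -- each T j R lies in A⁰ ∩ (vanishing on the first r columns)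
    have hmem : ∀ j : Fin n, T j R ∈ LinearMap.ker (op1 n α β a) ⊓ Van1 n β r := by
      intro j
      refine ⟨hker j R, ?_⟩
      intro i k hk
      have h1 : T j R i k + T R k i j + T k j i R = 0 := hcoc j R k i
      have h3 : T k R = 0 := hvan k R (by omega)
      have h2 : T R k = 0 := by rw [hanti R k, h3]; simp
      have h4 : T k j = 0 := hvan k j (by omega)
      rw [h2, h4] at h1
      simpa using h1
    have hex : ∀ j : Fin n, ∃ P, P ∈ Fil n α β a r ∧ sliceL n β R P = T j R := by
      intro j
      have := (Hsurj r hr).symm ▸ hmem j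
      obtain ⟨P, hP, hPe⟩ := Submodule.mem_map.mp this
      exact ⟨P, hP, hPe⟩
    choose D hD1 hD2 using hex
    -- the correction at this level
    set C0 : Fin n → (Fin β → Fin n → Fin n → ℂ) :=
      fun j => if r < j.1 then D j else 0 with hC0def
    have hC0eq : ∀ j : Fin n, C0 j = if r < j.1 then D j else 0 := fun _ => rfl
    have hC0A1 : ∀ j, C0 j ∈ Sym2Sub n β ⊓ LinearMap.ker (op2 n α β a) := by
      intro j
      rw [hC0eq]
      split
      · exact (hD1 j).1
      · exact Submodule.zero_mem _
    have hC0sym : ∀ x i p q, C0 x i p q = C0 x i q p := fun x i p q => (hC0A1 x).1 i p q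
    have hC0van : ∀ x i p q, p.1 < r → C0 x i p q = 0 := by
      intro x i p q hp
      rw [hC0eq]
      split
      · exact (hD1 x).2 i p q hp
      · rfl
    have hC0zero : ∀ x : Fin n, ¬ r < x.1 → C0 x = 0 := by
      intro x hx
      rw [hC0eq, if_neg hx]
    -- the corrected cocycle
    set T' : Fin n → Fin n → (Fin β → Fin n → ℂ) :=
      fun l j => T l j - sliceL n β j (C0 l) + sliceL n β l (C0 j) with hT'def
    have hT'apply : ∀ l j i k, T' l j i k = T l j i k - C0 l i j k + C0 j i l k :=
      fun l j i k => rfl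
    have hT'ker : ∀ l j, T' l j ∈ LinearMap.ker (op1 n α β a) := by
      intro l j
      refine Submodule.add_mem _ (Submodule.sub_mem _ (hker l j) ?_) ?_
      · exact LinearMap.mem_ker.mpr (slice_mem_ker n α β a (C0 l)
          (LinearMap.mem_ker.mp (hC0A1 l).2) j)
      · exact LinearMap.mem_ker.mpr (slice_mem_ker n α β a (C0 j)
          (LinearMap.mem_ker.mp (hC0A1 j).2) l)
    have hT'anti : ∀ l j, T' l j = - T' j l := by
      intro l j
      funext i k
      have h := congrFun (congrFun (hanti l j) i) k
      simp only [Pi.neg_apply] at h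
      show T l j i k - C0 l i j k + C0 j i l k = -(T j l i k - C0 j i l k + C0 l i j k)
      linear_combination h
    have hT'coc : ∀ l j k i, T' l j i k + T' j k i l + T' k l i j = 0 := by
      intro l j k i
      rw [hT'apply, hT'apply, hT'apply]
      linear_combination hcoc l j k i + hC0sym j i l k + hC0sym k i j l + hC0sym l i k j
    have hT'van0 : ∀ l j : Fin n, l.1 < r → T' l j = 0 := by
      intro l j hl
      funext i k
      have h1 : T l j i k = 0 := by rw [hvan l j hl]; rfl
      have h2 : C0 l i j k = 0 := by
        have := hC0zero l (by omega)
        rw [this]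
        rfl
      have h3 : C0 j i l k = 0 := hC0van j i l k hl
      show T l j i k - C0 l i j k + C0 j i l k = 0
      rw [h1, h2, h3]
      ring
    have hT'vanR : ∀ j : Fin n, T' R j = 0 := by
      intro j
      rcases Nat.lt_trichotomy j.1 r with h | h | h
      · rw [hT'anti R j, hT'van0 j R h]
        simp
      · have hjR : j = R := Fin.ext h
        subst hjR
        funext i k
        have hh := congrFun (congrFun (hT'anti R R) i) k
        simp only [Pi.neg_apply] at hh
        show T' R R i k = (0 : ℂ)
        linear_combination hh / 2
      · funext i k
        show T R j i k - C0 R i j k + C0 j i R k = (0 : ℂ)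
        have hC0R : C0 R i j k = 0 := by rw [hC0zero R (by omega)]; rfl
        have hC0j : C0 j i R k = T j R i k := by
          have hDj : C0 j = D j := by rw [hC0eq, if_pos h]
          rw [hDj]
          exact congrFun (congrFun (hD2 j) i) k
        have hTa : T R j i k = - T j R i k := by
          have := congrFun (congrFun (hanti R j) i) k
          simpa using this
        rw [hC0R, hC0j, hTa]
        ring
    have hT'van : ∀ l j : Fin n, l.1 < n - d → T' l j = 0 := by
      intro l j hl
      rcases Nat.lt_or_ge l.1 r with h | h
      · exact hT'van0 l j h
      · have : l = R := Fin.ext (by omega)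
        subst this
        exact hT'vanR j
    obtain ⟨C', hC'1, hC'2⟩ := ih T' hT'ker hT'anti hT'coc hT'van
    refine ⟨fun l => C0 l + C' l, fun l => Submodule.add_mem _ (hC0A1 l) (hC'1 l),
      fun l j i k => ?_⟩
    show C0 l i j k + C' l i j k - (C0 j i l k + C' j i l k) = T l j i k
    linear_combination hC'2 l j i k + hT'apply l j i k

/-- The assertion used in the proof of Lemma 4.6: if `ker ℬ = range 𝒜¹` and the tableau
of `A` is in involution, then `ker ℬ¹ = range 𝒜²` (a symmetric 2-jet in `S^α_2` lies in
the image of `𝒜²` if and only if it lies in `B¹`); in particular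
`dim B¹ = dim S^β_3 − dim A²`. -/
theorem ker_B1_eq_range_A2 (n α β γ : ℕ) (hn : 0 < n) (hα : 0 < α) (hβ : 0 < β)
    (hγ : 0 < γ) (a : Fin α → Fin β → Fin n → ℂ) (b : Fin γ → Fin α → Fin n → ℂ)
    (H1 : LinearMap.ker (op1 n γ α b) = Submodule.map (op2 n α β a) (Sym2Sub n β))
    (H2 : Module.finrank ℂ ↥(Sym2Sub n β ⊓ LinearMap.ker (op2 n α β a)) =
      Module.finrank ℂ ↥(LinearMap.ker (op1 n α β a)) +
        ∑ r ∈ Finset.Icc 1 (n - 1),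
          Module.finrank ℂ ↥(LinearMap.ker (op1 n α β a) ⊓ Van1 n β r)) :
    Sym2Sub n α ⊓ LinearMap.ker (op2 n γ α b) =
      Submodule.map (op3 n α β a) (Sym3Sub n β) ∧
    Module.finrank ℂ ↥(Sym2Sub n α ⊓ LinearMap.ker (op2 n γ α b)) =
      Module.finrank ℂ ↥(Sym3Sub n β) -
        Module.finrank ℂ ↥(Sym3Sub n β ⊓ LinearMap.ker (op3 n α β a)) := by
  have Hsurj := slice_surjective n α β hn a H2
  have hset : Sym2Sub n α ⊓ LinearMap.ker (op2 n γ α b) =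
      Submodule.map (op3 n α β a) (Sym3Sub n β) := by
    apply le_antisymm
    · -- the hard direction: every element of B¹ is in the image of 𝒜²
      rintro Q ⟨hQsym, hQker⟩
      have hex : ∀ l : Fin n, ∃ S, S ∈ Sym2Sub n β ∧ op2 n α β a S = sliceL n α l Q := by
        intro l
        have h1 : op1 n γ α b (sliceL n α l Q) = 0 :=
          slice_mem_ker n γ α b Q (LinearMap.mem_ker.mp hQker) l
        have h2 : sliceL n α l Q ∈ LinearMap.ker (op1 n γ α b) := LinearMap.mem_ker.mpr h1
        rw [H1] at h2
        obtain ⟨S, hS1, hS2⟩ := Submodule.mem_map.mp h2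
        exact ⟨S, hS1, hS2⟩
      choose S hS1 hS2 using hex
      have hSsym : ∀ l i p q, S l i p q = S l i q p := fun l => hS1 l
      have hSop : ∀ l (m : Fin α) (p : Fin n), (∑ i, ∑ k, a m i k * S l i p k) = Q m l p :=
        fun l m p => congrFun (congrFun (hS2 l) m) p
      set T : Fin n → Fin n → (Fin β → Fin n → ℂ) :=
        fun l j => sliceL n β j (S l) - sliceL n β l (S j) with hTdef
      have hTker : ∀ l j, T l j ∈ LinearMap.ker (op1 n α β a) := by
        intro l j
        rw [LinearMap.mem_ker]
        funext m
        show (∑ i, ∑ k, a m i k * (S l i j k - S j i l k)) = (0 : ℂ)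
        simp only [mul_sub, Finset.sum_sub_distrib]
        rw [hSop l m j, hSop j m l, hQsym m l j]
        ring
      have hTanti : ∀ l j, T l j = - T j l := by
        intro l j
        funext i k
        show S l i j k - S j i l k = -(S j i l k - S l i j k)
        ring
      have hTcoc : ∀ l j k i, T l j i k + T j k i l + T k l i j = 0 := by
        intro l j k i
        show (S l i j k - S j i l k) + (S j i k l - S k i j l) + (S k i l j - S l i k j) = 0
        linear_combination hSsym l i j k - hSsym j i l k + hSsym k i l j
      have hTvan : ∀ l j : Fin n, l.1 < n - n → T l j = 0 := fun l j hl => by omega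
      obtain ⟨C, hC1, hC2⟩ := cocycle_lemma n α β a Hsurj n T hTker hTanti hTcoc hTvan
      have hCsym : ∀ x i p q, C x i p q = C x i q p := fun x => (hC1 x).1
      refine Submodule.mem_map.mpr ⟨fun i l j k => S l i j k - C l i j k, ?_, ?_⟩
      · refine ⟨fun i j k l => ?_, fun i j k l => ?_, fun i j k l => ?_⟩
        · show S j i k l - C j i k l = S k i j l - C k i j l
          have h := hC2 j k i l
          have ht : T j k i l = S j i k l - S k i j l := rfl
          linear_combination - h - ht
        · show S j i k l - C j i k l = S j i l k - C j i l k
          linear_combination hSsym j i k l - hCsym j i k l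
        · show S j i k l - C j i k l = S l i k j - C l i k j
          have h := hC2 j l i k
          have ht : T j l i k = S j i l k - S l i j k := rfl
          linear_combination hSsym j i k l - hCsym j i k l - h - ht +
            hSsym l i j k - hCsym l i j k
      · funext m l p
        show (∑ i, ∑ k, a m i k * (S l i p k - C l i p k)) = Q m l p
        simp only [mul_sub, Finset.sum_sub_distrib]
        have hCz : (∑ i, ∑ k, a m i k * C l i p k) = (0 : ℂ) :=
          congrFun (congrFun (LinearMap.mem_ker.mp (hC1 l).2) m) p
        rw [hSop l m p, hCz]
        ring
    · -- the easy direction: the image of 𝒜² is contained in B¹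
      rintro Q ⟨P, hP, rfl⟩
      obtain ⟨hP1, hP2, hP3⟩ := hP
      constructor
      · intro m l p
        show (∑ i, ∑ k, a m i k * P i l p k) = ∑ i, ∑ k, a m i k * P i p l k
        exact Finset.sum_congr rfl fun i _ => Finset.sum_congr rfl fun k _ => by
          rw [hP1 i l p k]
      · refine LinearMap.mem_ker.mpr ?_
        funext m l
        set W : Fin β → Fin n → Fin n → ℂ := fun i j k => P i l j k with hWdef
        have hW : W ∈ Sym2Sub n β := fun i j k => hP2 i l j k
        have hmem : op2 n α β a W ∈ Submodule.map (op2 n α β a) (Sym2Sub n β) :=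
          Submodule.mem_map.mpr ⟨W, hW, rfl⟩
        rw [← H1] at hmem
        have hz : op1 n γ α b (op2 n α β a W) = 0 := LinearMap.mem_ker.mp hmem
        show op1 n γ α b (op2 n α β a W) m = (0 : ℂ)
        exact congrFun hz m
  refine ⟨hset, ?_⟩
  have h := finrank_map_add_finrank_inf_ker' (op3 n α β a) (Sym3Sub n β)
  rw [← hset] at h
  omega

end
end

section
/- Fix positive integers n, α, β and constant coefficients a(m,i,j) ∈ ℂ (m ≤ α, i ≤ β, j ≤ n). If dim A¹ = dim A⁰ + Σ_{r=1}^{n−1} dim A⁰_r, then for every k ∈ {1,…,n−1} the system restricted to the variables x_{k+1},…,x_n is also in involution, i.e. dim A¹_k = dim A⁰_k + Σ_{r=k+1}^{n−1} dim A⁰_r. -/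
noncomputable section

/-!
Write `e r = dim A¹_r` and `d r = dim A⁰_r` (indices from `0`). Slicing a 2-jet `P ∈ A¹_r` at
its `r`-th lower index gives an element of `A⁰_r`, and by the symmetry of `P` the kernel of this
slicing on `A¹_r` is `A¹_{r+1}`; hence `e r ≤ d r + e (r + 1)`. As `e n = 0`, telescoping gives
`e k ≤ ∑_{k ≤ r < n} d r` and `e 0 ≤ ∑_{r < k} d r + e k`, and involutivity `e 0 = ∑_{r < n} d r`
turns both into equalities.
-/

theorem Submodule.finrank_eq_finrank_map_add_finrank_inf_ker {K V W : Type*} [Field K]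
    [AddCommGroup V] [Module K V] [AddCommGroup W] [Module K W] [FiniteDimensional K V]
    (f : V →ₗ[K] W) (S : Submodule K V) :
    Module.finrank K S = Module.finrank K (S.map f) + Module.finrank K ↥(S ⊓ LinearMap.ker f) := by
  rw [← (f.domRestrict S).finrank_range_add_finrank_ker, LinearMap.range_domRestrict,
    LinearMap.ker_domRestrict, ← (Submodule.comapSubtypeEquivOfLe inf_le_left).finrank_eq,
    Submodule.comap_inf, Submodule.comap_subtype_self, top_inf_eq]

section Telescope

variable {M : Type*} [AddCommMonoid M] [PartialOrder M] {e d : ℕ → M}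

theorem le_sum_Ico_add_of_le_add_succ [IsOrderedAddMonoid M] {k m : ℕ} (hkm : k ≤ m)
    (hstep : ∀ r ∈ Finset.Ico k m, e r ≤ d r + e (r + 1)) :
    e k ≤ ∑ r ∈ Finset.Ico k m, d r + e m := by
  induction m, hkm using Nat.le_induction with
  | base => simp
  | succ m hkm ih =>
    calc e k ≤ ∑ r ∈ Finset.Ico k m, d r + e m :=
          ih fun r hr => hstep r (Finset.Ico_subset_Ico_right m.le_succ hr)
      _ ≤ ∑ r ∈ Finset.Ico k m, d r + (d m + e (m + 1)) :=
          by gcongr; exact hstep m (Finset.mem_Ico.2 ⟨hkm, m.lt_succ_self⟩)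
      _ = ∑ r ∈ Finset.Ico k (m + 1), d r + e (m + 1) := by
          rw [Finset.sum_Ico_succ_top hkm, add_assoc]

theorem eq_sum_Ico_of_le_add_succ [IsOrderedCancelAddMonoid M] {n k : ℕ} (hkn : k ≤ n)
    (hstep : ∀ r < n, e r ≤ d r + e (r + 1)) (hend : e n = 0)
    (hstart : e 0 = ∑ r ∈ Finset.range n, d r) :
    e k = ∑ r ∈ Finset.Ico k n, d r := by
  refine le_antisymm ?_ ?_
  · simpa [hend] using
      le_sum_Ico_add_of_le_add_succ hkn fun r hr => hstep r (Finset.mem_Ico.1 hr).2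
  · have h := le_sum_Ico_add_of_le_add_succ (e := e) (d := d) (Nat.zero_le k)
      fun r hr => hstep r ((Finset.mem_Ico.1 hr).2.trans_le hkn)
    rw [hstart, Finset.range_eq_Ico, ← Finset.sum_Ico_consecutive d (Nat.zero_le k) hkn] at h
    exact le_of_add_le_add_left h

end Telescope

def sliceMap (n β : ℕ) (r : Fin n) :
    (Fin β → Fin n → Fin n → ℂ) →ₗ[ℂ] (Fin β → Fin n → ℂ) where
  toFun P i j := P i r j
  map_add' _ _ := rfl
  map_smul' _ _ := rfl

section Slice

variable {n α β : ℕ} {P : Fin β → Fin n → Fin n → ℂ}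

theorem sliceMap_mem_ker_op1 (a : Fin α → Fin β → Fin n → ℂ)
    (hP : P ∈ LinearMap.ker (op2 n α β a)) (r : Fin n) :
    sliceMap n β r P ∈ LinearMap.ker (op1 n α β a) :=
  LinearMap.mem_ker.2 <| funext fun m => congrFun (congrFun (LinearMap.mem_ker.1 hP) m) r

theorem sliceMap_mem_Van1 {s : ℕ} (hP : P ∈ Van2 n β s) (r : Fin n) :
    sliceMap n β r P ∈ Van1 n β s :=
  fun i j hj => hP i r j (Or.inr hj)

theorem mem_Van2_succ_of_sliceMap_eq_zero (hsym : P ∈ Sym2Sub n β) {r : ℕ} (hr : r < n)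
    (hP : P ∈ Van2 n β r) (hslice : sliceMap n β ⟨r, hr⟩ P = 0) : P ∈ Van2 n β (r + 1) := by
  intro i j k hjk
  by_cases hlt : j.1 < r ∨ k.1 < r
  · exact hP i j k hlt
  have hrow : ∀ l, P i ⟨r, hr⟩ l = 0 := fun l => congrFun (congrFun hslice i) l
  obtain rfl | rfl : j = ⟨r, hr⟩ ∨ k = ⟨r, hr⟩ := by simp only [Fin.ext_iff]; omega
  · exact hrow k
  · rw [hsym]; exact hrow j

end Slice

theorem Van1_zero (n β : ℕ) : Van1 n β 0 = ⊤ :=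
  eq_top_iff.2 fun _ _ _ _ h => by omega

theorem Van2_zero (n β : ℕ) : Van2 n β 0 = ⊤ :=
  eq_top_iff.2 fun _ _ _ _ _ h => by omega

theorem Van2_self (n β : ℕ) : Van2 n β n = ⊥ :=
  eq_bot_iff.2 fun _ hP => (Submodule.mem_bot ℂ).2 <| funext fun i => funext fun j =>
    funext fun k => hP i j k (Or.inl j.2)

theorem finrank_A1_le_finrank_A0_add_finrank_A1_succ {n α β : ℕ}
    (a : Fin α → Fin β → Fin n → ℂ) {r : ℕ} (hr : r < n) :
    Module.finrank ℂ ↥(Sym2Sub n β ⊓ LinearMap.ker (op2 n α β a) ⊓ Van2 n β r) ≤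
      Module.finrank ℂ ↥(LinearMap.ker (op1 n α β a) ⊓ Van1 n β r) +
        Module.finrank ℂ ↥(Sym2Sub n β ⊓ LinearMap.ker (op2 n α β a) ⊓ Van2 n β (r + 1)) := by
  rw [Submodule.finrank_eq_finrank_map_add_finrank_inf_ker (sliceMap n β ⟨r, hr⟩)]
  refine add_le_add (Submodule.finrank_mono ?_) (Submodule.finrank_mono ?_)
  · rintro _ ⟨P, ⟨⟨-, hker⟩, hvan⟩, rfl⟩
    exact ⟨sliceMap_mem_ker_op1 a hker _, sliceMap_mem_Van1 hvan _⟩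
  · rintro P ⟨⟨⟨hsym, hker⟩, hvan⟩, hslice⟩
    exact ⟨⟨hsym, hker⟩, mem_Van2_succ_of_sliceMap_eq_zero hsym hr hvan hslice⟩

theorem involutive_restriction_general (n α β : ℕ)
    (a : Fin α → Fin β → Fin n → ℂ)
    (H2 : Module.finrank ℂ ↥(Sym2Sub n β ⊓ LinearMap.ker (op2 n α β a)) =
      Module.finrank ℂ ↥(LinearMap.ker (op1 n α β a)) +
        ∑ r ∈ Finset.Icc 1 (n - 1),
          Module.finrank ℂ ↥(LinearMap.ker (op1 n α β a) ⊓ Van1 n β r)) :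
    ∀ k ∈ Finset.Icc 1 (n - 1),
      Module.finrank ℂ
          ↥(Sym2Sub n β ⊓ LinearMap.ker (op2 n α β a) ⊓ Van2 n β k) =
        Module.finrank ℂ ↥(LinearMap.ker (op1 n α β a) ⊓ Van1 n β k) +
          ∑ r ∈ Finset.Icc (k + 1) (n - 1),
            Module.finrank ℂ ↥(LinearMap.ker (op1 n α β a) ⊓ Van1 n β r) := by
  intro k hk
  obtain ⟨hk1, hkn⟩ := Finset.mem_Icc.1 hk
  have hn : 0 < n := by omega
  have hIcc : ∀ m, Finset.Icc m (n - 1) = Finset.Ico m n :=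
    Finset.Icc_sub_one_right_eq_Ico_of_not_isMin (by simpa using hn.ne')
  have key := eq_sum_Ico_of_le_add_succ (n := n) (k := k)
    (e := fun r => Module.finrank ℂ ↥(Sym2Sub n β ⊓ LinearMap.ker (op2 n α β a) ⊓ Van2 n β r))
    (d := fun r => Module.finrank ℂ ↥(LinearMap.ker (op1 n α β a) ⊓ Van1 n β r))
    (by omega) (fun r hr => finrank_A1_le_finrank_A0_add_finrank_A1_succ a hr)
    (by simp [Van2_self])
    (by rw [Van2_zero, inf_top_eq, H2, Finset.range_eq_Ico,
      Finset.sum_eq_sum_Ico_succ_bot hn, Van1_zero, inf_top_eq, hIcc])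
  rwa [Finset.sum_eq_sum_Ico_succ_bot (by omega), ← hIcc] at key

/-- Stability of involutivity under restriction to the coordinate plane generated by
`x_{k+1},…,x_n` (used in the proof of Proposition 4.8): if the tableau of `A` is in
involution, then for every `k ∈ {1,…,n−1}` one has
`dim A¹_k = dim A⁰_k + Σ_{r=k+1}^{n−1} dim A⁰_r`. -/
theorem involutive_restriction (n α β : ℕ) (hn : 0 < n) (hα : 0 < α) (hβ : 0 < β)
    (a : Fin α → Fin β → Fin n → ℂ)
    (H2 : Module.finrank ℂ ↥(Sym2Sub n β ⊓ LinearMap.ker (op2 n α β a)) =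
      Module.finrank ℂ ↥(LinearMap.ker (op1 n α β a)) +
        ∑ r ∈ Finset.Icc 1 (n - 1),
          Module.finrank ℂ ↥(LinearMap.ker (op1 n α β a) ⊓ Van1 n β r)) :
    ∀ k ∈ Finset.Icc 1 (n - 1),
      Module.finrank ℂ
          ↥(Sym2Sub n β ⊓ LinearMap.ker (op2 n α β a) ⊓ Van2 n β k) =
        Module.finrank ℂ ↥(LinearMap.ker (op1 n α β a) ⊓ Van1 n β k) +
          ∑ r ∈ Finset.Icc (k + 1) (n - 1),
            Module.finrank ℂ ↥(LinearMap.ker (op1 n α β a) ⊓ Van1 n β r) :=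
  involutive_restriction_general n α β a H2
end
end
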